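/- arXiv:2512.21621 — 8 statements merged into one kernel-verified Lean document; each statement's English description precedes it below -/
import Mathlib

section
/- Let (Ω, 𝒜, μ) be a probability space, let u, d ∈ ℝ with d < 0 < u, and let L ∈ ℝ. Let γ : Ω → ℝ be measurable with 0 < γ₋ ≤ γ ≤ γ₊ almost everywhere for constants γ₋, γ₊, and let θ, g : Ω → ℝ be measurable and bounded (with NO restriction on ∫ θ dμ). For p ∈ (0,1) set x(p) := log(−(p·u)/((1−p)·d)), and for (p, Δ) ∈ (0,1) × ℝ define φ_{Δ,p} : Ω → ℝ by φ_{Δ,p} = θ·Δ/(u−d) + (x(p) + g)/(γ·(u−d)). Then there exists exactly one pair (p*, Δ*) ∈ (0,1) × ℝ satisfying both the consistency condition Δ* = (u−d)·∫ φ_{Δ*,p*} dμ and the market-clearing condition ∫ φ_{Δ*,p*} dμ = L; it is given by Δ* = (u−d)·L and p* = (−d) / ( u·exp( ( ∫(g/γ) dμ − (1 − ∫θ dμ)·(u−d)·L ) / ∫(1/γ) dμ ) − d ). -/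
open MeasureTheory

/-!
Integrating `φ_{Δ,p}` gives `(Δ·∫θ + x(p)·∫(1/γ) + ∫(g/γ)) / (u-d)`, which is affine in `Δ` and
in the log-odds `x(p)`. Market clearing pins `Δ = (u-d)·L`; since `∫(1/γ) > 0`, consistency then
pins `x(p)` to a single value `-c`. The coefficient `1 - ∫θ`, whose vanishing makes the pure
relative-performance game singular, only enters the constant `c`. Finally `x` is a bijection from `(0,1)`
onto `ℝ`, and `p* = -d / (u·eᶜ - d)` is the unique solution of `x(p) = -c`.
-/

section LogOdds

variable {u d : ℝ}

lemma neg_div_mul_exp_sub_mem_Ioo (hd : d < 0) (hu : 0 < u) (c : ℝ) :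
    -d / (u * Real.exp c - d) ∈ Set.Ioo (0 : ℝ) 1 := by
  have hden : 0 < u * Real.exp c - d := by nlinarith [Real.exp_pos c]
  exact ⟨div_pos (neg_pos.2 hd) hden,
    (div_lt_one hden).2 (by nlinarith [Real.exp_pos c])⟩

lemma log_odds_eq_neg_iff (hd : d < 0) (hu : 0 < u) {p : ℝ} (hp : p ∈ Set.Ioo (0 : ℝ) 1)
    (c : ℝ) :
    Real.log (-(p * u) / ((1 - p) * d)) = -c ↔ p = -d / (u * Real.exp c - d) := by
  obtain ⟨hp0, hp1⟩ := hp
  have hnum : -(p * u) < 0 := by nlinarith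
  have hden : (1 - p) * d < 0 := by nlinarith
  have hexp : 0 < u * Real.exp c - d := by nlinarith [Real.exp_pos c]
  rw [← Real.exp_eq_exp, Real.exp_log (div_pos_of_neg_of_neg hnum hden), Real.exp_neg,
    div_eq_iff hden.ne, inv_mul_eq_div, eq_div_iff (Real.exp_pos c).ne', eq_div_iff hexp.ne']
  constructor <;> intro h <;> linear_combination -h

end LogOdds

lemma integrable_div_of_ae_abs_le_of_ae_le {Ω : Type*} [MeasurableSpace Ω] {μ : Measure Ω}
    [IsFiniteMeasure μ] {f γ : Ω → ℝ} (hf : Measurable f) (hγ : Measurable γ) {C m : ℝ}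
    (hm : 0 < m) (hfC : ∀ᵐ ω ∂μ, |f ω| ≤ C) (hγm : ∀ᵐ ω ∂μ, m ≤ γ ω) :
    Integrable (fun ω => f ω / γ ω) μ := by
  refine Integrable.of_bound (hf.div hγ).aestronglyMeasurable (C / m) ?_
  filter_upwards [hfC, hγm] with ω hfω hγω
  rw [Real.norm_eq_abs, abs_div, abs_of_pos (hm.trans_le hγω)]
  exact div_le_div₀ ((abs_nonneg _).trans hfω) hfω hm hγω

lemma integral_mul_div_add_div_mul {Ω : Type*} [MeasurableSpace Ω] {μ : Measure Ω}
    {θ γ g : Ω → ℝ} (hθ : Integrable θ μ) (hγ : Integrable (fun ω => 1 / γ ω) μ)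
    (hg : Integrable (fun ω => g ω / γ ω) μ) (Δ y k : ℝ) :
    ∫ ω, (θ ω * Δ / k + (y + g ω) / (γ ω * k)) ∂μ
      = (Δ * ∫ ω, θ ω ∂μ + y * ∫ ω, 1 / γ ω ∂μ + ∫ ω, g ω / γ ω ∂μ) / k := by
  have hpointwise : ∀ ω, θ ω * Δ / k + (y + g ω) / (γ ω * k)
      = (Δ * θ ω + y * (1 / γ ω) + g ω / γ ω) / k := by
    intro ω
    simp only [div_eq_mul_inv, mul_inv]
    ring
  have hθγ : Integrable (fun ω => Δ * θ ω + y * (1 / γ ω)) μ :=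
    (hθ.const_mul Δ).add (hγ.const_mul y)
  simp only [hpointwise]
  rw [integral_div, integral_add hθγ hg,
    integral_add (hθ.const_mul Δ) (hγ.const_mul y), integral_const_mul, integral_const_mul]

lemma consistency_and_clearing_iff {k T A B L Δ y : ℝ} (hk : k ≠ 0) (hA : A ≠ 0) :
    (Δ = k * ((Δ * T + y * A + B) / k) ∧ (Δ * T + y * A + B) / k = L) ↔
      (Δ = k * L ∧ y = -((B - (1 - T) * k * L) / A)) := by
  constructor
  · rintro ⟨hΔ, hI⟩
    rw [hI] at hΔ
    refine ⟨hΔ, ?_⟩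
    rw [div_eq_iff hk, hΔ] at hI
    field_simp
    linear_combination hI
  · rintro ⟨hΔ, hy⟩
    have hI : (Δ * T + y * A + B) / k = L := by
      rw [div_eq_iff hk, hΔ, hy]
      field_simp
      ring
    exact ⟨by rw [hI, hΔ], hI⟩

/-- per-node market-clearing mean-field equilibrium (single population).
There is exactly one pair `(p*, Δ*) ∈ (0,1) × ℝ` satisfying the consistency condition
`Δ* = (u-d)·∫ φ_{Δ*,p*} dμ` and the market-clearing condition `∫ φ_{Δ*,p*} dμ = L`, and it is
given by the stated explicit formulas (no restriction on `∫ θ dμ`). -/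
theorem stmt_4 {Ω : Type*} [MeasurableSpace Ω] (μ : Measure Ω) [IsProbabilityMeasure μ]
    (u d L : ℝ) (hd : d < 0) (hu : 0 < u)
    (γ θ g : Ω → ℝ) (hγm : Measurable γ) (γlo γhi : ℝ) (hγlo : 0 < γlo)
    (hγb : ∀ᵐ ω ∂μ, γlo ≤ γ ω ∧ γ ω ≤ γhi)
    (hθm : Measurable θ) (Cθ : ℝ) (hθb : ∀ᵐ ω ∂μ, |θ ω| ≤ Cθ)
    (hgm : Measurable g) (Cg : ℝ) (hgb : ∀ᵐ ω ∂μ, |g ω| ≤ Cg) :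
    let x : ℝ → ℝ := fun p => Real.log (-(p * u) / ((1 - p) * d))
    let φ : ℝ → ℝ → Ω → ℝ := fun Δ p ω =>
      θ ω * Δ / (u - d) + (x p + g ω) / (γ ω * (u - d))
    let pstar : ℝ := (-d) / (u * Real.exp
      (((∫ ω, g ω / γ ω ∂μ) - (1 - ∫ ω, θ ω ∂μ) * (u - d) * L) / (∫ ω, 1 / γ ω ∂μ)) - d)
    let Δstar : ℝ := (u - d) * L
    pstar ∈ Set.Ioo (0 : ℝ) 1 ∧
    Δstar = (u - d) * ∫ ω, φ Δstar pstar ω ∂μ ∧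
    (∫ ω, φ Δstar pstar ω ∂μ) = L ∧
    ∀ p Δ : ℝ, p ∈ Set.Ioo (0 : ℝ) 1 →
      Δ = (u - d) * ∫ ω, φ Δ p ω ∂μ → (∫ ω, φ Δ p ω ∂μ) = L →
      p = pstar ∧ Δ = Δstar := by
  intro x φ pstar Δstar
  have hγlow : ∀ᵐ ω ∂μ, γlo ≤ γ ω := hγb.mono fun _ h => h.1
  have hθi : Integrable θ μ := Integrable.of_bound hθm.aestronglyMeasurable Cθ hθb
  have hγi : Integrable (fun ω => 1 / γ ω) μ := integrable_div_of_ae_abs_le_of_ae_le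
    measurable_const hγm hγlo (C := 1) (by simp) hγlow
  have hgγi := integrable_div_of_ae_abs_le_of_ae_le hgm hγm hγlo hgb hγlow
  have hA : 0 < ∫ ω, 1 / γ ω ∂μ := by
    obtain ⟨ω, hlo, hhi⟩ := hγb.exists
    have hconst : (0 : ℝ) < 1 / γhi := one_div_pos.2 (by linarith)
    refine hconst.trans_le ?_
    simpa using integral_mono_ae (integrable_const (1 / γhi)) hγi (hγb.mono fun ω h =>
      one_div_le_one_div_of_le (hγlo.trans_le h.1) h.2)
  have hφ : ∀ Δ p, ∫ ω, φ Δ p ω ∂μ = (Δ * (∫ ω, θ ω ∂μ) + x p * (∫ ω, 1 / γ ω ∂μ)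
      + ∫ ω, g ω / γ ω ∂μ) / (u - d) := fun Δ p =>
    integral_mul_div_add_div_mul hθi hγi hgγi Δ (x p) (u - d)
  have hequil := fun p Δ => consistency_and_clearing_iff (T := ∫ ω, θ ω ∂μ) (L := L) (Δ := Δ)
    (y := x p) (B := ∫ ω, g ω / γ ω ∂μ) (show u - d ≠ 0 by linarith) hA.ne'
  have hmem := neg_div_mul_exp_sub_mem_Ioo hd hu
    (((∫ ω, g ω / γ ω ∂μ) - (1 - ∫ ω, θ ω ∂μ) * (u - d) * L) / (∫ ω, 1 / γ ω ∂μ))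
  simp only [hφ]
  obtain ⟨hΔstar, hclear⟩ := (hequil pstar Δstar).2 ⟨rfl, (log_odds_eq_neg_iff hd hu hmem _).2 rfl⟩
  refine ⟨hmem, hΔstar, hclear, fun p Δ hp hΔ hI => ?_⟩
  obtain ⟨hΔ', hx⟩ := (hequil p Δ).1 ⟨hΔ, hI⟩
  exact ⟨(log_odds_eq_neg_iff hd hu hp _).1 hx, hΔ'⟩
end

section
/- Let (Ω, 𝒜, μ), u, d, L, γ, θ, g, x(p), φ_{Δ,p} be as follows: u, d ∈ ℝ with d < 0 < u; L ∈ ℝ; γ : Ω → ℝ measurable with 0 < γ₋ ≤ γ ≤ γ₊ a.e.; θ, g : Ω → ℝ measurable and bounded; x(p) := log(−(p·u)/((1−p)·d)); φ_{Δ,p} := θ·Δ/(u−d) + (x(p) + g)/(γ·(u−d)). Let (p*, Δ*) = ( (−d)/( u·exp( ( ∫(g/γ)dμ − (1−∫θ dμ)(u−d)L ) / ∫(1/γ)dμ ) − d ), (u−d)·L ). Then μ-almost everywhere, φ_{Δ*,p*} = (1/∫(1/γ)dμ)·( (1 − ∫θ dμ)/γ + θ·∫(1/γ)dμ )·L + (1/(u−d))·(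 g/γ − ( ∫(g/γ)dμ / ∫(1/γ)dμ )·(1/γ) ), and consequently ∫ φ_{Δ*,p*} dμ = L. -/
/-!
At the price `p*` the log-odds `x(p*)` take the value `((1 - ∫θ)(u - d)L - ∫g/γ) / ∫(1/γ)`,
so substituting it into `φ` yields the decomposition pointwise by field arithmetic. The supply
share `(1 / ∫(1/γ)) ((1 - ∫θ)/γ + θ ∫(1/γ))` has mean `1` and the hedge term
`g/γ - (∫(g/γ) / ∫(1/γ)) / γ` has mean `0`, so the mean position is `L`.
-/

open MeasureTheory

lemma integral_pos_of_ae_pos {α : Type*} [MeasurableSpace α] {μ : Measure α} [NeZero μ]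
    {f : α → ℝ} (hf : Integrable f μ) (hpos : ∀ᵐ x ∂μ, 0 < f x) : 0 < ∫ x, f x ∂μ := by
  rw [integral_pos_iff_support_of_nonneg_ae (hpos.mono fun _ h => h.le) hf]
  have hsupp : Function.support f =ᵐ[μ] (Set.univ : Set α) :=
    ae_eq_univ.mpr (ae_iff.mp (hpos.mono fun _ h => h.ne'))
  rw [measure_congr hsupp]
  exact Measure.measure_univ_pos.mpr (NeZero.ne μ)

-- `p = -d / (u e^c - d)` is where the log-odds `log (-(p u) / ((1 - p) d))` equal `-c`.
lemma log_odds_at_price {u d : ℝ} (hd : d < 0) (hu : 0 < u) (c : ℝ) :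
    Real.log (-((-d) / (u * Real.exp c - d) * u) / ((1 - (-d) / (u * Real.exp c - d)) * d))
      = -c := by
  have hden : u * Real.exp c - d ≠ 0 := by nlinarith [mul_pos hu (Real.exp_pos c)]
  have hodds : -((-d) / (u * Real.exp c - d) * u) / ((1 - (-d) / (u * Real.exp c - d)) * d)
      = (Real.exp c)⁻¹ := by
    field_simp [hd.ne, hu.ne', hden, (Real.exp_pos c).ne']
    ring
  rw [hodds, Real.log_inv, Real.log_exp]

lemma integrable_one_div_of_le {α : Type*} [MeasurableSpace α] {μ : Measure α}
    [IsFiniteMeasure μ] {f : α → ℝ} (hf : Measurable f) {c : ℝ} (hc : 0 < c)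
    (hle : ∀ᵐ x ∂μ, c ≤ f x) : Integrable (fun x => 1 / f x) μ := by
  refine .of_bound (measurable_const.div hf).aestronglyMeasurable (1 / c) ?_
  filter_upwards [hle] with x hx
  rw [Real.norm_eq_abs, abs_of_pos (one_div_pos.mpr (hc.trans_le hx))]
  exact one_div_le_one_div_of_le hc hx

lemma MeasureTheory.Integrable.bdd_div {α : Type*} [MeasurableSpace α] {μ : Measure α}
    {f g : α → ℝ} {C : ℝ}
    (hf : Integrable (fun x => 1 / f x) μ) (hg : AEStronglyMeasurable g μ)
    (hgC : ∀ᵐ x ∂μ, ‖g x‖ ≤ C) : Integrable (fun x => g x / f x) μ := by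
  simpa only [mul_one_div] using hf.bdd_mul hg hgC

section Decomposition

variable {Ω : Type*} [MeasurableSpace Ω] (μ : Measure Ω) (γ θ g : Ω → ℝ)

noncomputable def supplyShare (ω : Ω) : ℝ :=
  (1 / ∫ ω', 1 / γ ω' ∂μ) * ((1 - ∫ ω', θ ω' ∂μ) / γ ω + θ ω * ∫ ω', 1 / γ ω' ∂μ)

noncomputable def hedgeTerm (ω : Ω) : ℝ :=
  g ω / γ ω - ((∫ ω', g ω' / γ ω' ∂μ) / (∫ ω', 1 / γ ω' ∂μ)) * (1 / γ ω)

variable {μ γ θ g}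

lemma integrable_supplyShare (hγ : Integrable (fun ω => 1 / γ ω) μ) (hθ : Integrable θ μ) :
    Integrable (supplyShare μ γ θ) μ := by
  unfold supplyShare
  simp_rw [div_eq_mul_one_div (1 - ∫ ω', θ ω' ∂μ)]
  fun_prop

lemma integral_supplyShare (hγ : Integrable (fun ω => 1 / γ ω) μ) (hθ : Integrable θ μ)
    (hA : ∫ ω, 1 / γ ω ∂μ ≠ 0) : ∫ ω, supplyShare μ γ θ ω ∂μ = 1 := by
  unfold supplyShare
  simp_rw [div_eq_mul_one_div (1 - ∫ ω', θ ω' ∂μ)]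
  rw [integral_const_mul, integral_add (hγ.const_mul _) (hθ.mul_const _), integral_const_mul,
    integral_mul_const]
  field_simp
  ring

lemma integrable_hedgeTerm (hγ : Integrable (fun ω => 1 / γ ω) μ)
    (hgγ : Integrable (fun ω => g ω / γ ω) μ) : Integrable (hedgeTerm μ γ g) μ :=
  hgγ.sub (hγ.const_mul _)

lemma integral_hedgeTerm (hγ : Integrable (fun ω => 1 / γ ω) μ)
    (hgγ : Integrable (fun ω => g ω / γ ω) μ) (hA : ∫ ω, 1 / γ ω ∂μ ≠ 0) :
    ∫ ω, hedgeTerm μ γ g ω ∂μ = 0 := by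
  unfold hedgeTerm
  rw [integral_sub hgγ (hγ.const_mul _), integral_const_mul]
  field_simp
  ring

end Decomposition

/-- equilibrium strategy formula of the single-population MC-MFE.  At the
market-clearing pair `(p*, Δ*)`, the optimal position `φ_{Δ*,p*}` is a.e. equal to the
supply-share plus hedge-redistribution decomposition, and its mean is `L`. -/
theorem stmt_5 {Ω : Type*} [MeasurableSpace Ω] (μ : Measure Ω) [IsProbabilityMeasure μ]
    (u d L : ℝ) (hd : d < 0) (hu : 0 < u)
    (γ θ g : Ω → ℝ) (hγm : Measurable γ) (γlo γhi : ℝ) (hγlo : 0 < γlo)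
    (hγb : ∀ᵐ ω ∂μ, γlo ≤ γ ω ∧ γ ω ≤ γhi)
    (hθm : Measurable θ) (Cθ : ℝ) (hθb : ∀ᵐ ω ∂μ, |θ ω| ≤ Cθ)
    (hgm : Measurable g) (Cg : ℝ) (hgb : ∀ᵐ ω ∂μ, |g ω| ≤ Cg) :
    let x : ℝ → ℝ := fun p => Real.log (-(p * u) / ((1 - p) * d))
    let pstar : ℝ := (-d) / (u * Real.exp
      (((∫ ω, g ω / γ ω ∂μ) - (1 - ∫ ω, θ ω ∂μ) * (u - d) * L) / (∫ ω, 1 / γ ω ∂μ)) - d)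
    let Δstar : ℝ := (u - d) * L
    let φ : Ω → ℝ := fun ω => θ ω * Δstar / (u - d) + (x pstar + g ω) / (γ ω * (u - d))
    (∀ᵐ ω ∂μ, φ ω =
      (1 / ∫ ω', 1 / γ ω' ∂μ) *
        ((1 - ∫ ω', θ ω' ∂μ) / γ ω + θ ω * ∫ ω', 1 / γ ω' ∂μ) * L +
      (1 / (u - d)) *
        (g ω / γ ω - ((∫ ω', g ω' / γ ω' ∂μ) / (∫ ω', 1 / γ ω' ∂μ)) * (1 / γ ω))) ∧
    (∫ ω, φ ω ∂μ) = L := by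
  intro x pstar Δstar φ
  have hγlo_le : ∀ᵐ ω ∂μ, γlo ≤ γ ω := hγb.mono fun _ h => h.1
  have hγ : Integrable (fun ω => 1 / γ ω) μ := integrable_one_div_of_le hγm hγlo hγlo_le
  have hθ : Integrable θ μ := .of_bound hθm.aestronglyMeasurable Cθ (by simpa using hθb)
  have hgγ : Integrable (fun ω => g ω / γ ω) μ :=
    hγ.bdd_div hgm.aestronglyMeasurable (by simpa using hgb)
  have hA : 0 < ∫ ω, 1 / γ ω ∂μ := integral_pos_of_ae_pos hγ
    (hγlo_le.mono fun _ h => one_div_pos.mpr (hγlo.trans_le h))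
  have hx : x pstar =
      ((1 - ∫ ω, θ ω ∂μ) * (u - d) * L - ∫ ω, g ω / γ ω ∂μ) / ∫ ω, 1 / γ ω ∂μ := by
    simp only [x, pstar]
    rw [log_odds_at_price hd hu]
    ring
  have hφ : ∀ᵐ ω ∂μ, φ ω = supplyShare μ γ θ ω * L + (1 / (u - d)) * hedgeTerm μ γ g ω := by
    filter_upwards [hγlo_le] with ω hω
    simp only [φ, Δstar, hx, supplyShare, hedgeTerm]
    field_simp [(hγlo.trans_le hω).ne', hA.ne', (by linarith : u - d ≠ 0)]
    ring
  refine ⟨hφ, ?_⟩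
  rw [integral_congr_ae hφ, integral_add ((integrable_supplyShare hγ hθ).mul_const L)
      ((integrable_hedgeTerm hγ hgγ).const_mul _), integral_mul_const, integral_const_mul,
    integral_supplyShare hγ hθ hA.ne', integral_hedgeTerm hγ hgγ hA.ne']
  ring
end

section
/- Let m ≥ 1, let Θ be an m×m real matrix with I − Θ invertible, let 𝒯̊ ∈ ℝ^m have strictly positive entries, let 𝒱̊ ∈ ℝ^m, and let w ∈ ℝ^m have nonnegative entries summing to 1; assume 𝒯 := wᵀ(I−Θ)^{−1}𝒯̊ ≠ 0, and set 𝒱 := wᵀ(I−Θ)^{−1}𝒱̊. Let L ∈ ℝ, let u, d ∈ ℝ with d < 0 < u, and for p ∈ (0,1) set x(p) := log(−(p·u)/((1−p)·d)). Then there exists exactly one pair (p*, Δ*) ∈ (0,1) × ℝ^m satisfying both the consistency condition (I−Θ)Δ* = x(p*)·𝒯̊ + 𝒱̊ and the market-clearing condition ⟨w, Δ*⟩ = (u−d)·L; it satisfies p* = (−d)/( u·exp( (𝒱 − (u−d)·L)/𝒯 ) − d ) and Δ* = (I−Θ)^{−1}( x(p*)·𝒯̊ + 𝒱̊ ). -/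
open Matrix

/-!
The consistency condition determines `Δ = (I-Θ)⁻¹(x(p)𝒯̊ + 𝒱̊)` from `p`, and substituting this
into market clearing leaves the scalar equation `x(p)·𝒯 + 𝒱 = (u-d)L`, i.e.
`x(p) = ((u-d)L - 𝒱)/𝒯`. The log-odds map `x` is a bijection from `(0,1)` onto `ℝ` whose
inverse is the logistic map `z ↦ -d / (u·e^{-z} - d)`, so `p` is unique and equals `p*`.
-/

section LogOdds

variable {u d : ℝ}

lemma odds_pos (hd : d < 0) (hu : 0 < u) {p : ℝ} (hp : p ∈ Set.Ioo (0 : ℝ) 1) :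
    0 < -(p * u) / ((1 - p) * d) :=
  div_pos_of_neg_of_neg (by nlinarith [hp.1]) (by nlinarith [hp.2])

lemma log_odds_injOn (hd : d < 0) (hu : 0 < u) :
    Set.InjOn (fun p => Real.log (-(p * u) / ((1 - p) * d))) (Set.Ioo 0 1) := by
  intro p hp q hq hpq
  have hodds : -(p * u) / ((1 - p) * d) = -(q * u) / ((1 - q) * d) :=
    Real.log_injOn_pos (odds_pos hd hu hp) (odds_pos hd hu hq) hpq
  have h1p : 1 - p ≠ 0 := by linarith [hp.2]
  have h1q : 1 - q ≠ 0 := by linarith [hq.2]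
  rw [div_eq_div_iff (mul_ne_zero h1p hd.ne) (mul_ne_zero h1q hd.ne)] at hodds
  have : u * d * (p - q) = 0 := by linear_combination (-1 : ℝ) * hodds
  have hud : u * d ≠ 0 := mul_ne_zero hu.ne' hd.ne
  linarith [(mul_eq_zero.mp this).resolve_left hud]

lemma logistic_mem_Ioo (hd : d < 0) (hu : 0 < u) (z : ℝ) :
    -d / (u * Real.exp z - d) ∈ Set.Ioo (0 : ℝ) 1 := by
  have hE := Real.exp_pos z
  have hD : 0 < u * Real.exp z - d := by nlinarith
  exact ⟨div_pos (neg_pos.2 hd) hD, (div_lt_one hD).2 (by nlinarith)⟩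

lemma log_odds_logistic (hd : d < 0) (hu : 0 < u) (z : ℝ) :
    let p := -d / (u * Real.exp z - d)
    Real.log (-(p * u) / ((1 - p) * d)) = -z := by
  intro p
  have hD : u * Real.exp z - d ≠ 0 := by nlinarith [Real.exp_pos z]
  have hd0 : d ≠ 0 := hd.ne
  have hodds : -(p * u) / ((1 - p) * d) = (Real.exp z)⁻¹ := by
    simp only [p]
    field_simp
    ring
  rw [hodds, Real.log_inv, Real.log_exp]

end LogOdds

namespace Matrix

variable {n : Type*} [Fintype n] {R : Type*} [CommRing R]

lemma mulVec_eq_iff_eq_inv_mulVec [DecidableEq n] {A : Matrix n n R} (hA : IsUnit A) {x b : n → R} :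
    A *ᵥ x = b ↔ x = A⁻¹ *ᵥ b := by
  have hdet := (isUnit_iff_isUnit_det A).1 hA
  constructor
  · rintro rfl
    rw [mulVec_mulVec, nonsing_inv_mul A hdet, one_mulVec]
  · rintro rfl
    rw [mulVec_mulVec, mul_nonsing_inv A hdet, one_mulVec]

lemma dotProduct_mulVec_smul_add (w : n → R) (B : Matrix n n R) (a : R) (T V : n → R) :
    w ⬝ᵥ (B *ᵥ (a • T + V)) = a * (w ⬝ᵥ (B *ᵥ T)) + w ⬝ᵥ (B *ᵥ V) := by
  rw [mulVec_add, mulVec_smul, dotProduct_add, dotProduct_smul, smul_eq_mul]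

end Matrix

theorem stmt_8_general (m : ℕ) (Θ : Matrix (Fin m) (Fin m) ℝ)
    (hΘ : IsUnit (1 - Θ))
    (Tcirc : Fin m → ℝ) (Vcirc : Fin m → ℝ)
    (w : Fin m → ℝ)
    (hTagg : w ⬝ᵥ ((1 - Θ)⁻¹ *ᵥ Tcirc) ≠ 0)
    (L u d : ℝ) (hd : d < 0) (hu : 0 < u) :
    let x : ℝ → ℝ := fun p => Real.log (-(p * u) / ((1 - p) * d))
    let Tagg : ℝ := w ⬝ᵥ ((1 - Θ)⁻¹ *ᵥ Tcirc)
    let Vagg : ℝ := w ⬝ᵥ ((1 - Θ)⁻¹ *ᵥ Vcirc)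
    let pstar : ℝ := (-d) / (u * Real.exp ((Vagg - (u - d) * L) / Tagg) - d)
    let Δstar : Fin m → ℝ := (1 - Θ)⁻¹ *ᵥ (x pstar • Tcirc + Vcirc)
    pstar ∈ Set.Ioo (0 : ℝ) 1 ∧
    (1 - Θ) *ᵥ Δstar = x pstar • Tcirc + Vcirc ∧
    w ⬝ᵥ Δstar = (u - d) * L ∧
    ∀ (p : ℝ) (Δ : Fin m → ℝ), p ∈ Set.Ioo (0 : ℝ) 1 →
      (1 - Θ) *ᵥ Δ = x p • Tcirc + Vcirc → w ⬝ᵥ Δ = (u - d) * L →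
      p = pstar ∧ Δ = Δstar := by
  intro x Tagg Vagg pstar Δstar
  have hpstar : pstar ∈ Set.Ioo (0 : ℝ) 1 := logistic_mem_Ioo hd hu _
  have hx : x pstar = -((Vagg - (u - d) * L) / Tagg) := log_odds_logistic hd hu _
  have hclear : ∀ p, w ⬝ᵥ ((1 - Θ)⁻¹ *ᵥ (x p • Tcirc + Vcirc)) = (u - d) * L ↔
      x p = x pstar := by
    intro p
    rw [dotProduct_mulVec_smul_add, hx, neg_div', eq_div_iff hTagg]
    constructor <;> intro h <;> linarith
  refine ⟨hpstar, (mulVec_eq_iff_eq_inv_mulVec hΘ).2 rfl, (hclear _).2 rfl, ?_⟩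
  intro p Δ hp hcons hmc
  have hΔ : Δ = (1 - Θ)⁻¹ *ᵥ (x p • Tcirc + Vcirc) := (mulVec_eq_iff_eq_inv_mulVec hΘ).1 hcons
  have hp_eq : p = pstar := log_odds_injOn hd hu hp hpstar ((hclear p).1 (hΔ ▸ hmc))
  exact ⟨hp_eq, by rw [hΔ, hp_eq]⟩

/-- per-node multi-population market-clearing mean-field equilibrium.  With
`I − Θ` invertible and aggregate risk tolerance `𝒯 = wᵀ(I−Θ)⁻¹𝒯̊ ≠ 0`, there is exactly one
pair `(p*, Δ*) ∈ (0,1) × ℝ^m` satisfying the consistency condition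
`(I−Θ)Δ* = x(p*)·𝒯̊ + 𝒱̊` and the market clearing `⟨w, Δ*⟩ = (u−d)·L`, with the stated
explicit formulas. -/
theorem stmt_8 (m : ℕ) (hm : 1 ≤ m) (Θ : Matrix (Fin m) (Fin m) ℝ)
    (hΘ : IsUnit (1 - Θ))
    (Tcirc : Fin m → ℝ) (hT : ∀ p, 0 < Tcirc p) (Vcirc : Fin m → ℝ)
    (w : Fin m → ℝ) (hw : ∀ p, 0 ≤ w p) (hw1 : ∑ p, w p = 1)
    (hTagg : w ⬝ᵥ ((1 - Θ)⁻¹ *ᵥ Tcirc) ≠ 0)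
    (L u d : ℝ) (hd : d < 0) (hu : 0 < u) :
    let x : ℝ → ℝ := fun p => Real.log (-(p * u) / ((1 - p) * d))
    let Tagg : ℝ := w ⬝ᵥ ((1 - Θ)⁻¹ *ᵥ Tcirc)
    let Vagg : ℝ := w ⬝ᵥ ((1 - Θ)⁻¹ *ᵥ Vcirc)
    let pstar : ℝ := (-d) / (u * Real.exp ((Vagg - (u - d) * L) / Tagg) - d)
    let Δstar : Fin m → ℝ := (1 - Θ)⁻¹ *ᵥ (x pstar • Tcirc + Vcirc)
    pstar ∈ Set.Ioo (0 : ℝ) 1 ∧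
    (1 - Θ) *ᵥ Δstar = x pstar • Tcirc + Vcirc ∧
    w ⬝ᵥ Δstar = (u - d) * L ∧
    ∀ (p : ℝ) (Δ : Fin m → ℝ), p ∈ Set.Ioo (0 : ℝ) 1 →
      (1 - Θ) *ᵥ Δ = x p • Tcirc + Vcirc → w ⬝ᵥ Δ = (u - d) * L →
      p = pstar ∧ Δ = Δstar :=
  stmt_8_general m Θ hΘ Tcirc Vcirc w hTagg L u d hd hu
end

section
/- Let m ≥ 1. For each p ∈ {1,…,m} let (Ω_p, μ_p) be a probability space carrying measurable γ^p : Ω_p → ℝ with 0 < γ₋ ≤ γ^p ≤ γ₊ a.e., θ^p : Ω_p → ℝ^m bounded, and g^p : Ω_p → ℝ bounded. Let Θ_{p,k} := ∫ θ^p_k dμ_p and assume I − Θ is invertible. Set 𝒯̊_p := ∫(1/γ^p) dμ_p and 𝒱̊_p := ∫(g^p/γ^p) dμ_p. Let w ∈ ℝ^m have nonnegative entries summing to 1, assume 𝒯 := wᵀ(I−Θ)^{−1}𝒯̊ ≠ 0, and set 𝒱 := wᵀ(I−Θ)^{−1}𝒱̊. Let L ∈ ℝ and u, d ∈ ℝ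 with d < 0 < u. Define on Ω_p the random variables 𝒯^p := 1/γ^p + ⟨θ^p, (I−Θ)^{−1}𝒯̊⟩, 𝒱^p := g^p/γ^p + ⟨θ^p, (I−Θ)^{−1}𝒱̊⟩ and φ̂^p := (𝒯^p/𝒯)·L + (1/(u−d))·( 𝒱^p − (𝒯^p/𝒯)·𝒱 ). Then Σ_{p=1}^m w_p·∫ 𝒯^p dμ_p = 𝒯, Σ_{p=1}^m w_p·∫ 𝒱^p dμ_p = 𝒱, and Σ_{p=1}^m w_p·∫ φ̂^p dμ_p = L. -/
open MeasureTheory Matrix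

lemma integ_of_bdd {Ω : Type*} [MeasurableSpace Ω] (μ : Measure Ω) [IsProbabilityMeasure μ]
    (f : Ω → ℝ) (hf : AEStronglyMeasurable f μ) (C : ℝ) (h : ∀ᵐ ω ∂μ, |f ω| ≤ C) :
    Integrable f μ :=
  (integrable_const C).mono' hf (h.mono fun ω h => by simpa using h)

/-- aggregation relations and market-clearing property of the equilibrium
strategies in the multi-population MC-MFE: the population-weighted averages of the
effective risk tolerances `𝒯^p`, effective-liability sensitivities `𝒱^p`, and equilibrium
positions `φ̂^p` equal `𝒯`, `𝒱`, and `L`, respectively. -/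
theorem stmt_9 (m : ℕ) (hm : 1 ≤ m)
    (Ω : Fin m → Type*) [∀ p, MeasurableSpace (Ω p)]
    (μ : ∀ p, Measure (Ω p)) [∀ p, IsProbabilityMeasure (μ p)]
    (γ : ∀ p, Ω p → ℝ) (θ : ∀ p, Ω p → Fin m → ℝ) (g : ∀ p, Ω p → ℝ)
    (hγm : ∀ p, Measurable (γ p)) (hθm : ∀ p, Measurable (θ p))
    (hgm : ∀ p, Measurable (g p))
    (γlo γhi : ℝ) (hγlo : 0 < γlo)
    (hγb : ∀ p, ∀ᵐ ω ∂μ p, γlo ≤ γ p ω ∧ γ p ω ≤ γhi)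
    (Cθ Cg : ℝ) (hθb : ∀ p, ∀ᵐ ω ∂μ p, ∀ k, |θ p ω k| ≤ Cθ)
    (hgb : ∀ p, ∀ᵐ ω ∂μ p, |g p ω| ≤ Cg)
    (hΘinv : IsUnit (1 - Matrix.of (fun p k => ∫ ω, θ p ω k ∂μ p) :
      Matrix (Fin m) (Fin m) ℝ))
    (w : Fin m → ℝ) (hw : ∀ p, 0 ≤ w p) (hw1 : ∑ p, w p = 1)
    (L u d : ℝ) (hd : d < 0) (hu : 0 < u)
    (hTagg : w ⬝ᵥ ((1 - Matrix.of (fun p k => ∫ ω, θ p ω k ∂μ p) :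
        Matrix (Fin m) (Fin m) ℝ)⁻¹ *ᵥ (fun p => ∫ ω, 1 / γ p ω ∂μ p)) ≠ 0) :
    let Θ : Matrix (Fin m) (Fin m) ℝ := Matrix.of fun p k => ∫ ω, θ p ω k ∂μ p
    let Tcirc : Fin m → ℝ := fun p => ∫ ω, 1 / γ p ω ∂μ p
    let Vcirc : Fin m → ℝ := fun p => ∫ ω, g p ω / γ p ω ∂μ p
    let Tagg : ℝ := w ⬝ᵥ ((1 - Θ)⁻¹ *ᵥ Tcirc)
    let Vagg : ℝ := w ⬝ᵥ ((1 - Θ)⁻¹ *ᵥ Vcirc)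
    let T : ∀ p, Ω p → ℝ := fun p ω => 1 / γ p ω + θ p ω ⬝ᵥ ((1 - Θ)⁻¹ *ᵥ Tcirc)
    let V : ∀ p, Ω p → ℝ := fun p ω => g p ω / γ p ω + θ p ω ⬝ᵥ ((1 - Θ)⁻¹ *ᵥ Vcirc)
    let φhat : ∀ p, Ω p → ℝ := fun p ω =>
      (T p ω / Tagg) * L + (1 / (u - d)) * (V p ω - (T p ω / Tagg) * Vagg)
    (∑ p, w p * ∫ ω, T p ω ∂μ p) = Tagg ∧
    (∑ p, w p * ∫ ω, V p ω ∂μ p) = Vagg ∧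
    (∑ p, w p * ∫ ω, φhat p ω ∂μ p) = L := by
  intro Θ Tcirc Vcirc Tagg Vagg T V φhat
  have hud : u - d ≠ 0 := by linarith
  have hT0 : Tagg ≠ 0 := hTagg
  have hdet : IsUnit (1 - Θ).det := (Matrix.isUnit_iff_isUnit_det _).mp hΘinv
  have hinv : ∀ x : Fin m → ℝ, (1 - Θ) *ᵥ ((1 - Θ)⁻¹ *ᵥ x) = x := fun x => by
    rw [Matrix.mulVec_mulVec, Matrix.mul_nonsing_inv _ hdet, Matrix.one_mulVec]
  -- integrabilities
  have hγint : ∀ p, Integrable (fun ω => 1 / γ p ω) (μ p) := fun p => by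
    refine integ_of_bdd _ _ (measurable_const.div (hγm p)).aestronglyMeasurable (1 / γlo)
      ((hγb p).mono fun ω ⟨h1, _⟩ => ?_)
    have hpos : 0 < γ p ω := lt_of_lt_of_le hγlo h1
    rw [abs_of_pos (by positivity)]
    exact one_div_le_one_div_of_le hγlo h1
  have hgγint : ∀ p, Integrable (fun ω => g p ω / γ p ω) (μ p) := fun p => by
    refine integ_of_bdd _ _ ((hgm p).div (hγm p)).aestronglyMeasurable (Cg / γlo)
      (((hγb p).and (hgb p)).mono fun ω ⟨⟨h1, _⟩, h3⟩ => ?_)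
    have hpos : 0 < γ p ω := lt_of_lt_of_le hγlo h1
    rw [abs_div]
    refine div_le_div₀ (le_trans (abs_nonneg _) h3) h3 hγlo ?_
    rwa [abs_of_pos hpos]
  have hθint : ∀ p k, Integrable (fun ω => θ p ω k) (μ p) := fun p k => by
    refine integ_of_bdd _ _ ((measurable_pi_apply k).comp (hθm p)).aestronglyMeasurable Cθ
      ((hθb p).mono fun ω h => h k)
  have hdotint : ∀ p (x : Fin m → ℝ), Integrable (fun ω => θ p ω ⬝ᵥ x) (μ p) := fun p x => by
    simp only [dotProduct]
    exact integrable_finset_sum _ fun k _ => (hθint p k).mul_const (x k)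
  have hdotval : ∀ p (x : Fin m → ℝ), (∫ ω, θ p ω ⬝ᵥ x ∂μ p) = (Θ *ᵥ x) p := fun p x => by
    simp only [dotProduct]
    rw [integral_finset_sum _ fun k _ => (hθint p k).mul_const (x k)]
    simp only [integral_mul_const]
    simp [Θ, Matrix.mulVec, dotProduct]
  -- integrals of T and V
  have hTint : ∀ p, Integrable (T p) (μ p) := fun p =>
    (hγint p).add (hdotint p _)
  have hVint : ∀ p, Integrable (V p) (μ p) := fun p =>
    (hgγint p).add (hdotint p _)
  have intT : ∀ p, (∫ ω, T p ω ∂μ p) = ((1 - Θ)⁻¹ *ᵥ Tcirc) p := fun p => by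
    have : (∫ ω, T p ω ∂μ p) = Tcirc p + (Θ *ᵥ ((1 - Θ)⁻¹ *ᵥ Tcirc)) p := by
      simp only [T]
      rw [integral_add (hγint p) (hdotint p _), hdotval]
    rw [this]
    have h := congrFun (hinv Tcirc) p
    rw [Matrix.sub_mulVec, Matrix.one_mulVec] at h
    have h' : ((1 - Θ)⁻¹ *ᵥ Tcirc) p - (Θ *ᵥ ((1 - Θ)⁻¹ *ᵥ Tcirc)) p = Tcirc p := h
    linarith
  have intV : ∀ p, (∫ ω, V p ω ∂μ p) = ((1 - Θ)⁻¹ *ᵥ Vcirc) p := fun p => by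
    have : (∫ ω, V p ω ∂μ p) = Vcirc p + (Θ *ᵥ ((1 - Θ)⁻¹ *ᵥ Vcirc)) p := by
      simp only [V]
      rw [integral_add (hgγint p) (hdotint p _), hdotval]
    rw [this]
    have h := congrFun (hinv Vcirc) p
    rw [Matrix.sub_mulVec, Matrix.one_mulVec] at h
    have h' : ((1 - Θ)⁻¹ *ᵥ Vcirc) p - (Θ *ᵥ ((1 - Θ)⁻¹ *ᵥ Vcirc)) p = Vcirc p := h
    linarith
  have h1 : (∑ p, w p * ∫ ω, T p ω ∂μ p) = Tagg := by
    simp only [intT]; rfl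
  have h2 : (∑ p, w p * ∫ ω, V p ω ∂μ p) = Vagg := by
    simp only [intV]; rfl
  refine ⟨h1, h2, ?_⟩
  set c1 : ℝ := L / Tagg - (1 / (u - d)) * (Vagg / Tagg) with hc1
  have hφeq : ∀ p ω, φhat p ω = c1 * T p ω + (1 / (u - d)) * V p ω := fun p ω => by
    simp only [φhat, hc1]; ring
  have intφ : ∀ p, (∫ ω, φhat p ω ∂μ p)
      = c1 * (∫ ω, T p ω ∂μ p) + (1 / (u - d)) * (∫ ω, V p ω ∂μ p) := fun p => by
    simp only [hφeq]
    rw [integral_add ((hTint p).const_mul _) ((hVint p).const_mul _),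
      integral_const_mul, integral_const_mul]
  calc (∑ p, w p * ∫ ω, φhat p ω ∂μ p)
      = c1 * (∑ p, w p * ∫ ω, T p ω ∂μ p)
        + (1 / (u - d)) * (∑ p, w p * ∫ ω, V p ω ∂μ p) := by
        simp only [intφ]
        rw [Finset.mul_sum, Finset.mul_sum, ← Finset.sum_add_distrib]
        exact Finset.sum_congr rfl fun p _ => by ring
    _ = c1 * Tagg + (1 / (u - d)) * Vagg := by rw [h1, h2]
    _ = L := by rw [hc1]; field_simp; ring
end

section
/- Let m ≥ 1 and let Θ be an m×m real matrix; set A := I − Θ. Assume the kernel of the linear map x ↦ Ax on ℝ^m has dimension 1, let v, κ ∈ ℝ^m be unit vectors with Aᵀv = 0 and Aκ = 0, and assume ⟨v, κ⟩ ≠ 0. Let G be an m×m real matrix satisfying the Moore–Penrose equations AGA = A, GAG = G, (AG)ᵀ = AG and (GA)ᵀ = GA, and set P := I − (⟨v,κ⟩)^{−1}·κvᵀ. Then for every ε ∈ ℝ with ε ≠ 0, |ε|·‖PG‖ < 1 (‖·‖ the operator norm induced by the Euclidean norm) and A + εI invertible, the series Σ_{n=0}^∞ (−ε)^n (PG)^{n+1}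 P converges and (A + εI)^{−1} = ε^{−1}·(⟨v,κ⟩)^{−1}·κvᵀ + Σ_{n=0}^∞ (−ε)^n (PG)^{n+1} P. -/
open Matrix

section aux
variable {m : ℕ}

lemma aux_mul_vecMulVec (M : Matrix (Fin m) (Fin m) ℝ) (a b : Fin m → ℝ) :
    M * vecMulVec a b = vecMulVec (M *ᵥ a) b := by
  ext i j
  simp [mul_apply, vecMulVec_apply, mulVec, dotProduct, Finset.sum_mul, mul_assoc]

lemma aux_vecMulVec_mul (M : Matrix (Fin m) (Fin m) ℝ) (a b : Fin m → ℝ) :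
    vecMulVec a b * M = vecMulVec a (b ᵥ* M) := by
  ext i j
  simp [mul_apply, vecMulVec_apply, vecMul, dotProduct, Finset.mul_sum, mul_assoc]

lemma aux_vecMul_vecMulVec (u a b : Fin m → ℝ) :
    u ᵥ* vecMulVec a b = (u ⬝ᵥ a) • b := by
  ext j
  simp [vecMul, vecMulVec_apply, dotProduct, Finset.sum_mul, mul_assoc]

lemma aux_smul_vecMulVec (c : ℝ) (a b : Fin m → ℝ) :
    c • vecMulVec a b = vecMulVec (c • a) b := by
  ext i j
  simp [vecMulVec_apply, mul_assoc]

lemma aux_mulVec_single (M : Matrix (Fin m) (Fin m) ℝ) (j : Fin m) :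
    M *ᵥ Pi.single j 1 = fun i => M i j := by
  ext i
  simp [mulVec, dotProduct, Pi.single_apply]

end aux

/-- The continuous linear equivalence underlying `Matrix.toEuclideanCLM`. -/
noncomputable def auxTL (m : ℕ) :
    Matrix (Fin m) (Fin m) ℝ ≃L[ℝ]
      (EuclideanSpace ℝ (Fin m) →L[ℝ] EuclideanSpace ℝ (Fin m)) :=
  LinearEquiv.toContinuousLinearEquiv
    { toFun := Matrix.toEuclideanCLM (𝕜 := ℝ)
      invFun := (Matrix.toEuclideanCLM (𝕜 := ℝ)).symm
      left_inv := fun x => by simp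
      right_inv := fun x => by simp
      map_add' := fun x y => map_add _ x y
      map_smul' := fun r x => map_smul (Matrix.toEuclideanCLM (𝕜 := ℝ)) r x }

lemma auxTL_apply (m : ℕ) (M : Matrix (Fin m) (Fin m) ℝ) :
    auxTL m M = Matrix.toEuclideanCLM (𝕜 := ℝ) M := rfl

/-- Key Banach-algebra computation for the resolvent expansion. -/
lemma aux_clm_key {B : Type*} [NormedRing B] [NormedAlgebra ℝ B] [CompleteSpace B]
    (a q p x : B) (ε : ℝ) (hε : ε ≠ 0)
    (haq : a * q = 0) (hqp : q + p = 1)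
    (haxp : ∀ n : ℕ, a * (x ^ (n + 1) * p) = x ^ n * p)
    (hsumg : Summable (fun n : ℕ => (-ε) ^ n • (x ^ (n + 1) * p)))
    (hsumf : Summable (fun n : ℕ => (-ε) ^ n • (x ^ n * p))) :
    (a + ε • 1) * (ε⁻¹ • q + ∑' n : ℕ, (-ε) ^ n • (x ^ (n + 1) * p)) = 1 := by
  have h1 : (a + ε • 1) * (ε⁻¹ • q) = q := by
    have h : (a + ε • 1) * q = ε • q := by
      rw [add_mul, haq, zero_add, smul_mul_assoc, one_mul]
    rw [mul_smul_comm, h, smul_smul, inv_mul_cancel₀ hε, one_smul]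
  have h2 : ∀ n : ℕ, (a + ε • 1) * ((-ε) ^ n • (x ^ (n + 1) * p))
      = (-ε) ^ n • (x ^ n * p) - (-ε) ^ (n + 1) • (x ^ (n + 1) * p) := by
    intro n
    have hsc : (-ε) ^ n * ε = -((-ε) ^ (n + 1)) := by rw [pow_succ]; ring
    rw [mul_smul_comm, add_mul, smul_mul_assoc, one_mul, haxp n, smul_add, smul_smul,
      hsc, neg_smul, ← sub_eq_add_neg]
  have h3 : (a + ε • 1) * (∑' n : ℕ, (-ε) ^ n • (x ^ (n + 1) * p))
      = ∑' n : ℕ, ((a + ε • 1) * ((-ε) ^ n • (x ^ (n + 1) * p))) :=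
    (ContinuousLinearMap.mul ℝ B (a + ε • 1)).map_tsum hsumg
  have hsumf' : Summable (fun n : ℕ => (-ε) ^ (n + 1) • (x ^ (n + 1) * p)) :=
    (summable_nat_add_iff (f := fun n : ℕ => (-ε) ^ n • (x ^ n * p)) 1).mpr hsumf
  have h4 : (∑' n : ℕ, ((-ε) ^ n • (x ^ n * p) - (-ε) ^ (n + 1) • (x ^ (n + 1) * p))) = p := by
    rw [Summable.tsum_sub hsumf hsumf', Summable.tsum_eq_zero_add hsumf, add_sub_cancel_right,
      pow_zero, pow_zero, one_smul, one_mul]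
  rw [mul_add, h1, h3, tsum_congr h2, h4, hqp]

/-- Lemma 3.2 (resolvent expansion).  With `A = I − Θ`, `dim Ker A = 1`, unit
vectors `v ∈ Ker Aᵀ`, `κ ∈ Ker A` with `⟨v,κ⟩ ≠ 0`, `G` the Moore–Penrose pseudoinverse of
`A` and `P = I − ⟨v,κ⟩⁻¹κvᵀ`: for every `ε ≠ 0` with `|ε|·‖PG‖ < 1` (Euclidean operator
norm) and `A + εI` invertible, the series `Σ (−ε)ⁿ (PG)^{n+1} P` converges and
`(A+εI)⁻¹ = ε⁻¹⟨v,κ⟩⁻¹κvᵀ + Σ_{n≥0} (−ε)ⁿ (PG)^{n+1} P`. -/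
theorem stmt_12 (m : ℕ) (hm : 1 ≤ m) (Θ : Matrix (Fin m) (Fin m) ℝ)
    (A : Matrix (Fin m) (Fin m) ℝ) (hA : A = 1 - Θ)
    (hker : Module.finrank ℝ (LinearMap.ker A.mulVecLin) = 1)
    (v κ : Fin m → ℝ) (hvunit : v ⬝ᵥ v = 1) (hκunit : κ ⬝ᵥ κ = 1)
    (hvA : Aᵀ *ᵥ v = 0) (hκA : A *ᵥ κ = 0) (hvκ : v ⬝ᵥ κ ≠ 0)
    (G : Matrix (Fin m) (Fin m) ℝ)
    (hG1 : A * G * A = A) (hG2 : G * A * G = G)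
    (hG3 : (A * G)ᵀ = A * G) (hG4 : (G * A)ᵀ = G * A) :
    let P : Matrix (Fin m) (Fin m) ℝ := 1 - (v ⬝ᵥ κ)⁻¹ • vecMulVec κ v
    ∀ ε : ℝ, ε ≠ 0 →
      |ε| * ‖Matrix.toEuclideanCLM (𝕜 := ℝ) (P * G)‖ < 1 →
      IsUnit (A + ε • (1 : Matrix (Fin m) (Fin m) ℝ)) →
      Summable (fun n : ℕ => (-ε) ^ n • ((P * G) ^ (n + 1) * P)) ∧
      (A + ε • (1 : Matrix (Fin m) (Fin m) ℝ))⁻¹ =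
        ε⁻¹ • ((v ⬝ᵥ κ)⁻¹ • vecMulVec κ v) +
          ∑' n : ℕ, (-ε) ^ n • ((P * G) ^ (n + 1) * P) := by
  intro P ε hε hnorm hunit
  have hv0 : v ≠ 0 := by
    intro h; rw [h] at hvunit; simp [dotProduct] at hvunit
  set Q : Matrix (Fin m) (Fin m) ℝ := (v ⬝ᵥ κ)⁻¹ • vecMulVec κ v with hQdef
  have hPdef : P = 1 - Q := rfl
  -- basic algebra with P and Q
  have hAQ : A * Q = 0 := by
    rw [hQdef, Matrix.mul_smul, aux_mul_vecMulVec, hκA]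
    ext i j; simp [vecMulVec_apply]
  have hAP : A * P = A := by rw [hPdef, mul_sub, mul_one, hAQ, sub_zero]
  have hvQ : v ᵥ* Q = v := by
    rw [hQdef, aux_smul_vecMulVec, aux_vecMul_vecMulVec, dotProduct_smul,
      smul_eq_mul, inv_mul_cancel₀ hvκ, one_smul]
  have hvP : v ᵥ* P = 0 := by
    rw [hPdef, Matrix.vecMul_sub, Matrix.vecMul_one, hvQ, sub_self]
  have hvX : v ᵥ* (P * G) = 0 := by
    rw [← Matrix.vecMul_vecMul, hvP, Matrix.zero_vecMul]
  have hvXP : ∀ n : ℕ, v ᵥ* ((P * G) ^ n * P) = 0 := by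
    intro n
    cases n with
    | zero => simpa using hvP
    | succ n =>
      rw [pow_succ', mul_assoc, ← Matrix.vecMul_vecMul, hvX, Matrix.zero_vecMul]
  -- transpose kernel facts
  have hNsymm : (1 - A * G)ᵀ = 1 - A * G := by
    rw [transpose_sub, transpose_one, hG3]
  have hATN : Aᵀ * (1 - A * G) = 0 := by
    have h : Aᵀ * (A * G) = Aᵀ := by
      calc Aᵀ * (A * G) = Aᵀ * (A * G)ᵀ := by rw [hG3]
        _ = (A * G * A)ᵀ := by rw [← transpose_mul]
        _ = Aᵀ := by rw [hG1]
    rw [mul_sub, mul_one, h, sub_self]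
  have hspan : Submodule.span ℝ {v} = LinearMap.ker (Aᵀ).mulVecLin := by
    have h1 := LinearMap.finrank_range_add_finrank_ker A.mulVecLin
    have h2 := LinearMap.finrank_range_add_finrank_ker (Aᵀ).mulVecLin
    rw [Module.finrank_pi] at h1 h2
    have hrt : (Aᵀ).rank = A.rank := Matrix.rank_transpose A
    unfold Matrix.rank at hrt
    have hK : Module.finrank ℝ (LinearMap.ker (Aᵀ).mulVecLin) = 1 := by omega
    have hle : Submodule.span ℝ {v} ≤ LinearMap.ker (Aᵀ).mulVecLin := by
      rw [Submodule.span_singleton_le_iff_mem, LinearMap.mem_ker,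
        Matrix.mulVecLin_apply, hvA]
    exact Submodule.eq_of_le_of_finrank_eq hle (by rw [finrank_span_singleton hv0, hK])
  have hNcol : ∀ y : Fin m → ℝ, ∃ t : ℝ, (1 - A * G) *ᵥ y = t • v := by
    intro y
    have hmem : (1 - A * G) *ᵥ y ∈ LinearMap.ker (Aᵀ).mulVecLin := by
      rw [LinearMap.mem_ker, Matrix.mulVecLin_apply, Matrix.mulVec_mulVec, hATN,
        Matrix.zero_mulVec]
    rw [← hspan, Submodule.mem_span_singleton] at hmem
    obtain ⟨t, ht⟩ := hmem
    exact ⟨t, ht.symm⟩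
  -- (1 - A*G) annihilates matrices whose columns are ⊥ v on the left
  have hNM : ∀ M : Matrix (Fin m) (Fin m) ℝ, v ᵥ* M = 0 → (1 - A * G) * M = 0 := by
    intro M hvM
    obtain ⟨t₀, ht₀⟩ := hNcol v
    have hvN : v ᵥ* (1 - A * G) = t₀ • v := by
      conv_lhs => rw [← hNsymm]
      rw [Matrix.vecMul_transpose, ht₀]
    have key : ∀ y : Fin m → ℝ, (1 - A * G) *ᵥ (M *ᵥ y) = 0 := by
      intro y
      obtain ⟨t, ht⟩ := hNcol (M *ᵥ y)
      have h1 : v ⬝ᵥ ((1 - A * G) *ᵥ (M *ᵥ y)) = t := by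
        rw [ht, dotProduct_smul, hvunit]
        simp
      have h3 : v ⬝ᵥ (M *ᵥ y) = 0 := by
        rw [dotProduct_mulVec, hvM, zero_dotProduct]
      have h2 : v ⬝ᵥ ((1 - A * G) *ᵥ (M *ᵥ y)) = 0 := by
        rw [dotProduct_mulVec, hvN, smul_dotProduct, h3]
        simp
      rw [ht, h1.symm.trans h2, zero_smul]
    ext i j
    have h := key (Pi.single j 1)
    rw [Matrix.mulVec_mulVec, aux_mulVec_single] at h
    simpa using congrFun h i
  -- the key telescoping identity at matrix level
  have hAX : A * (P * G) = A * G := by rw [← mul_assoc, hAP]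
  have hAXP : ∀ n : ℕ, A * ((P * G) ^ (n + 1) * P) = (P * G) ^ n * P := by
    intro n
    have hNzero := hNM ((P * G) ^ n * P) (hvXP n)
    rw [sub_mul, one_mul, sub_eq_zero] at hNzero
    rw [pow_succ', mul_assoc (P * G), ← mul_assoc A (P * G), hAX]
    exact hNzero.symm
  -- analytic part
  set T := Matrix.toEuclideanCLM (𝕜 := ℝ) (n := Fin m) with hT
  set X : Matrix (Fin m) (Fin m) ℝ := P * G with hXdef
  have hsumT : Summable (fun n : ℕ => auxTL m ((-ε) ^ n • (X ^ (n + 1) * P))) := by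
    apply Summable.of_norm
    have hb : ∀ n : ℕ, ‖auxTL m ((-ε) ^ n • (X ^ (n + 1) * P))‖ ≤
        (‖T X‖ * ‖T P‖) * (|ε| * ‖T X‖) ^ n := by
      intro n
      rw [auxTL_apply, _root_.map_smul, _root_.map_mul, map_pow]
      rw [norm_smul ((-ε) ^ n) ((T X) ^ (n + 1) * T P)]
      calc ‖(-ε) ^ n‖ * ‖(T X) ^ (n + 1) * T P‖
          ≤ |ε| ^ n * (‖T X‖ ^ (n + 1) * ‖T P‖) := by
            apply mul_le_mul ?_ ?_ (norm_nonneg _) (by positivity)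
            · rw [norm_pow, Real.norm_eq_abs, abs_neg]
            · exact le_trans (norm_mul_le _ _)
                (mul_le_mul_of_nonneg_right (norm_pow_le' _ (Nat.succ_pos n)) (norm_nonneg _))
        _ = (‖T X‖ * ‖T P‖) * (|ε| * ‖T X‖) ^ n := by
            rw [pow_succ, mul_pow]; ring
    refine Summable.of_nonneg_of_le (fun n => norm_nonneg _) hb ?_
    exact Summable.mul_left _ (summable_geometric_of_lt_one (by positivity) hnorm)
  have hsumg : Summable (fun n : ℕ => (-ε) ^ n • (X ^ (n + 1) * P)) :=
    (auxTL m).summable.mp hsumT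
  have hsumf : Summable (fun n : ℕ => (-ε) ^ n • (X ^ n * P)) := by
    rw [← summable_nat_add_iff 1]
    have := hsumg.const_smul (-ε)
    refine this.congr fun n => ?_
    rw [smul_smul, ← pow_succ']
  refine ⟨hsumg, Matrix.inv_eq_right_inv ?_⟩
  -- transfer the identity through auxTL
  apply (auxTL m).injective
  have TLmul : ∀ a b : Matrix (Fin m) (Fin m) ℝ, auxTL m (a * b) = auxTL m a * auxTL m b :=
    fun a b => _root_.map_mul T a b
  have TLadd : ∀ a b : Matrix (Fin m) (Fin m) ℝ, auxTL m (a + b) = auxTL m a + auxTL m b :=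
    fun a b => map_add T a b
  have TLsmul : ∀ (r : ℝ) (a : Matrix (Fin m) (Fin m) ℝ), auxTL m (r • a) = r • auxTL m a :=
    fun r a => map_smul T r a
  have TLone : auxTL m (1 : Matrix (Fin m) (Fin m) ℝ) = 1 := map_one T
  have TLpow : ∀ (a : Matrix (Fin m) (Fin m) ℝ) (n : ℕ), auxTL m (a ^ n) = (auxTL m a) ^ n :=
    fun a n => map_pow T a n
  have TLg : ∀ n : ℕ, auxTL m ((-ε) ^ n • (X ^ (n + 1) * P))
      = (-ε) ^ n • ((auxTL m X) ^ (n + 1) * auxTL m P) := by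
    intro n; rw [TLsmul, TLmul, TLpow]
  rw [TLmul, TLadd, TLadd, TLsmul, TLsmul, TLone, (auxTL m).map_tsum, tsum_congr TLg]
  -- now in CLM land
  have hsumf' : Summable (fun n : ℕ => (-ε) ^ n • ((auxTL m X) ^ n * auxTL m P)) := by
    have := (auxTL m).summable.mpr hsumf
    refine this.congr fun n => ?_
    rw [TLsmul, TLmul, TLpow]
  have hsumg' : Summable (fun n : ℕ => (-ε) ^ n • ((auxTL m X) ^ (n + 1) * auxTL m P)) := by
    refine ((auxTL m).summable.mpr hsumg).congr fun n => TLg n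
  refine aux_clm_key (auxTL m A) (auxTL m Q) (auxTL m P) (auxTL m X) ε hε ?_ ?_ ?_ hsumg' hsumf'
  · rw [← TLmul, hAQ, map_zero]
  · rw [← TLadd, hPdef, add_sub_cancel, TLone]
  · intro n
    rw [← TLpow, ← TLmul, ← TLmul, hAXP n, TLmul, TLpow]
end

section
/- Let m ≥ 1 and let Θ be an m×m real matrix; set A := I − Θ. Assume the kernel of the linear map x ↦ Ax on ℝ^m has dimension 1, and let v, κ ∈ ℝ^m be nonzero with Aᵀv = 0, Aκ = 0 and ⟨v, κ⟩ ≠ 0. Then there exists η > 0 such that A + εI is invertible for every real ε with 0 < |ε| < η, and ε·(A + εI)^{−1} converges to (⟨v,κ⟩)^{−1}·κvᵀ as ε → 0. -/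
/-!
Put `P := ⟨v,κ⟩⁻¹ κvᵀ`. Then `P` is idempotent with `AP = PA = 0`, and `A + P` is invertible:
a vector it kills is orthogonal to `v` (apply `vᵀ`), hence lies in `Ker A = ℝκ`, hence is `0`.
Both `(1 - P)(A + ε)` and `(A + P + ε)(1 - P)` equal `A + ε(1 - P)`, which yields
`(A + ε)⁻¹ = ε⁻¹P + (A + P + ε)⁻¹(1 - P)` as soon as `ε ≠ 0` and `A + P + ε` is invertible, as it
is near `0`. So `ε(A + ε)⁻¹ = P + ε(A + P + ε)⁻¹(1 - P) → P`.
-/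

open Matrix Filter Topology

namespace Matrix

variable {n 𝕜 : Type*} [Fintype n] [DecidableEq n] [Field 𝕜]

lemma isUnit_add_smul_vecMulVec {A : Matrix n n 𝕜} {κ v : n → 𝕜} {c : 𝕜}
    (hker : LinearMap.ker A.mulVecLin = 𝕜 ∙ κ) (hvA : v ᵥ* A = 0) (hc : c ≠ 0)
    (hvκ : v ⬝ᵥ κ ≠ 0) : IsUnit (A + c • vecMulVec κ v) := by
  rw [← mulVec_injective_iff_isUnit, ← coe_mulVecLin, ← LinearMap.ker_eq_bot,
    Submodule.eq_bot_iff]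
  intro x hx
  have hAx : A *ᵥ x + (c * (v ⬝ᵥ x)) • κ = 0 := by
    simpa [add_mulVec, smul_mulVec, vecMulVec_mulVec, mul_smul] using hx
  have hvx : v ⬝ᵥ x = 0 := by
    have h := congrArg (v ⬝ᵥ ·) hAx
    simp only [dotProduct_add, dotProduct_mulVec, hvA, zero_dotProduct, dotProduct_smul,
      smul_eq_mul, zero_add, dotProduct_zero] at h
    simpa [hc, hvκ] using h
  obtain ⟨t, rfl⟩ : ∃ t : 𝕜, t • κ = x := by
    rw [← Submodule.mem_span_singleton, ← hker]
    simpa [hvx] using hAx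
  have ht : t = 0 := by simpa [dotProduct_smul, hvκ] using hvx
  simp [ht]

variable {A P : Matrix n n 𝕜} {ε : 𝕜}

lemma inv_add_smul_one_mul_self (hAP : A * P = 0) (hPA : P * A = 0) (hP : P * P = P)
    (hε : ε ≠ 0) (hN : IsUnit (A + P + ε • 1)) :
    (ε⁻¹ • P + (A + P + ε • 1)⁻¹ * (1 - P)) * (A + ε • 1) = 1 := by
  have hcomm : (1 - P) * (A + ε • 1) = (A + P + ε • 1) * (1 - P) := by
    simp only [sub_mul, mul_sub, add_mul, mul_add, hAP, hPA, hP, one_mul, mul_one,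
      smul_mul, Matrix.mul_smul]
    abel
  rw [add_mul, Matrix.mul_assoc, hcomm, ← Matrix.mul_assoc,
    nonsing_inv_mul _ ((isUnit_iff_isUnit_det _).1 hN), Matrix.one_mul, smul_mul, mul_add,
    hPA, Matrix.mul_smul, Matrix.mul_one, zero_add, smul_smul, inv_mul_cancel₀ hε, one_smul,
    add_sub_cancel]

lemma isUnit_add_smul_one (hAP : A * P = 0) (hPA : P * A = 0) (hP : P * P = P) (hε : ε ≠ 0)
    (hN : IsUnit (A + P + ε • 1)) : IsUnit (A + ε • 1) :=
  (isUnit_iff_isUnit_det _).2 <|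
    isUnit_det_of_left_inverse (inv_add_smul_one_mul_self hAP hPA hP hε hN)

lemma inv_add_smul_one_eq (hAP : A * P = 0) (hPA : P * A = 0) (hP : P * P = P) (hε : ε ≠ 0)
    (hN : IsUnit (A + P + ε • 1)) :
    (A + ε • 1)⁻¹ = ε⁻¹ • P + (A + P + ε • 1)⁻¹ * (1 - P) :=
  inv_eq_left_inv (inv_add_smul_one_mul_self hAP hPA hP hε hN)

variable [TopologicalSpace 𝕜] [IsTopologicalRing 𝕜] [T1Space 𝕜]

lemma eventually_isUnit_add_smul_one {N : Matrix n n 𝕜} (hN : IsUnit N) :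
    ∀ᶠ ε in 𝓝 (0 : 𝕜), IsUnit (N + ε • 1) := by
  have hdet : ContinuousAt (fun ε : 𝕜 => (N + ε • 1).det) 0 :=
    (continuous_const.add (continuous_id.smul continuous_const)).matrix_det.continuousAt
  have hdet0 : (N + (0 : 𝕜) • 1).det ≠ 0 := by
    simpa [isUnit_iff_isUnit_det] using hN
  filter_upwards [hdet.eventually_ne hdet0] with ε hε
  exact (isUnit_iff_isUnit_det _).2 (isUnit_iff_ne_zero.2 hε)

lemma tendsto_smul_inv_add_smul_one [ContinuousInv₀ 𝕜] (hAP : A * P = 0) (hPA : P * A = 0)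
    (hP : P * P = P) (hN : IsUnit (A + P)) :
    Tendsto (fun ε : 𝕜 => ε • (A + ε • 1)⁻¹) (𝓝[≠] 0) (𝓝 P) := by
  have hinv : ContinuousAt (fun ε : 𝕜 => (A + P + ε • 1)⁻¹) 0 := by
    refine (continuousAt_matrix_inv (A + P) ?_).comp_of_eq (by fun_prop) (by simp)
    rw [Ring.inverse_eq_inv']
    exact continuousAt_inv₀ (isUnit_iff_ne_zero.1 ((isUnit_iff_isUnit_det _).1 hN))
  have hlim : Tendsto (fun ε : 𝕜 => P + ε • ((A + P + ε • 1)⁻¹ * (1 - P))) (𝓝 0) (𝓝 P) := by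
    have hcont : ContinuousAt (fun ε : 𝕜 => P + ε • ((A + P + ε • 1)⁻¹ * (1 - P))) 0 := by
      fun_prop
    simpa using hcont.tendsto
  refine (hlim.mono_left nhdsWithin_le_nhds).congr' ?_
  filter_upwards [nhdsWithin_le_nhds (eventually_isUnit_add_smul_one hN),
    self_mem_nhdsWithin] with ε hNε hε
  rw [inv_add_smul_one_eq hAP hPA hP hε hNε, smul_add, smul_smul, mul_inv_cancel₀ hε, one_smul]

end Matrix

theorem stmt_13_general (m : ℕ)
    (A : Matrix (Fin m) (Fin m) ℝ)
    (hker : Module.finrank ℝ (LinearMap.ker A.mulVecLin) = 1)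
    (v κ : Fin m → ℝ)
    (hvA : Aᵀ *ᵥ v = 0) (hκA : A *ᵥ κ = 0) (hvκ : v ⬝ᵥ κ ≠ 0) :
    (∃ η : ℝ, 0 < η ∧ ∀ ε : ℝ, 0 < |ε| → |ε| < η →
      IsUnit (A + ε • (1 : Matrix (Fin m) (Fin m) ℝ))) ∧
    Tendsto (fun ε : ℝ => ε • (A + ε • (1 : Matrix (Fin m) (Fin m) ℝ))⁻¹)
      (𝓝[≠] 0) (𝓝 ((v ⬝ᵥ κ)⁻¹ • vecMulVec κ v)) := by
  set P := (v ⬝ᵥ κ)⁻¹ • vecMulVec κ v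
  have hvA' : v ᵥ* A = 0 := by rwa [← mulVec_transpose]
  have hAP : A * P = 0 := by simp [P, mul_vecMulVec, hκA]
  have hPA : P * A = 0 := by simp [P, vecMulVec_mul, hvA']
  have hP : P * P = P := by
    simp only [P, smul_mul, Matrix.mul_smul, vecMulVec_mul_vecMulVec, vecMulVec_smul, smul_smul]
    rw [inv_mul_cancel₀ hvκ, mul_one]
  have hκ : κ ≠ 0 := by
    rintro rfl
    simp at hvκ
  have hkerA : LinearMap.ker A.mulVecLin = ℝ ∙ κ :=
    eq_span_singleton_of_mem_of_finrank_eq_one hker (by simpa using hκA) hκ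
  have hN : IsUnit (A + P) := isUnit_add_smul_vecMulVec hkerA hvA' (inv_ne_zero hvκ) hvκ
  refine ⟨?_, tendsto_smul_inv_add_smul_one hAP hPA hP hN⟩
  obtain ⟨η, hη, hball⟩ := Metric.eventually_nhds_iff.1 (eventually_isUnit_add_smul_one hN)
  exact ⟨η, hη, fun ε hε hεη =>
    isUnit_add_smul_one hAP hPA hP (abs_pos.1 hε) (hball (by simpa using hεη))⟩

/-- residue of the resolvent at its simple pole.  With `A = I − Θ`,
`dim Ker A = 1`, `Aᵀv = 0`, `Aκ = 0`, `⟨v,κ⟩ ≠ 0`, there is `η > 0` such that `A + εI` is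
invertible for `0 < |ε| < η`, and `ε·(A+εI)⁻¹ → ⟨v,κ⟩⁻¹·κvᵀ` as `ε → 0`. -/
theorem stmt_13 (m : ℕ) (hm : 1 ≤ m) (Θ : Matrix (Fin m) (Fin m) ℝ)
    (A : Matrix (Fin m) (Fin m) ℝ) (hA : A = 1 - Θ)
    (hker : Module.finrank ℝ (LinearMap.ker A.mulVecLin) = 1)
    (v κ : Fin m → ℝ) (hv : v ≠ 0) (hκ : κ ≠ 0)
    (hvA : Aᵀ *ᵥ v = 0) (hκA : A *ᵥ κ = 0) (hvκ : v ⬝ᵥ κ ≠ 0) :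
    (∃ η : ℝ, 0 < η ∧ ∀ ε : ℝ, 0 < |ε| → |ε| < η →
      IsUnit (A + ε • (1 : Matrix (Fin m) (Fin m) ℝ))) ∧
    Tendsto (fun ε : ℝ => ε • (A + ε • (1 : Matrix (Fin m) (Fin m) ℝ))⁻¹)
      (𝓝[≠] 0) (𝓝 ((v ⬝ᵥ κ)⁻¹ • vecMulVec κ v)) :=
  stmt_13_general m A hker v κ hvA hκA hvκ
end

section
/- Let m ≥ 1 and let Θ be an m×m real matrix; set A := I − Θ. Assume the kernel of the linear map x ↦ Ax on ℝ^m has dimension 1, let v, κ ∈ ℝ^m be nonzero with Aᵀv = 0, Aκ = 0 and ⟨v, κ⟩ ≠ 0, let G be an m×m real matrix satisfying AGA = A, GAG = G, (AG)ᵀ = AG и (GA)ᵀ = GA, and set P := I − (⟨v,κ⟩)^{−1}·κvᵀ. Then there exists η > 0 such that A + εI is invertible for every real ε with 0 < |ε| < η, and (A + εI)^{−1} − ε^{−1}·(⟨v,κ⟩)^{−1}·κvᵀ converges to P·G·P as ε → 0. -/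
open Matrix Filter Topology LinearMap Module

/-! `Q = ⟨v,κ⟩⁻¹ κ vᵀ` is idempotent with `A Q = 0`, and `P = 1 - Q`. Since `Ker A` is a line,
`Im A` is the hyperplane `vᗮ`, which contains `Im P`; as `A G` fixes `Im A`, this gives
`A G P = P`, so `B = P G P` satisfies `A B = 1 - Q` and `Q B = 0`. These two identities give
`(A + ε)(B + ε⁻¹ Q) = 1 + ε B`, whence `(A + ε)⁻¹ - ε⁻¹ Q = B (1 + ε B)⁻¹ → B`. -/

theorem add_smul_one_mul_add_inv_smul {K R : Type*} [Field K] [Ring R] [Algebra K R]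
    {A B Q : R} (hAB : A * B = 1 - Q) (hAQ : A * Q = 0) {ε : K} (hε : ε ≠ 0) :
    (A + ε • 1) * (B + ε⁻¹ • Q) = 1 + ε • B := by
  rw [add_mul, mul_add, mul_add, hAB, mul_smul_comm, hAQ, smul_zero, smul_one_mul, smul_one_mul,
    smul_smul, mul_inv_cancel₀ hε, one_smul]
  abel

namespace Matrix

theorem mul_mul_eq_self_of_range_le {l m p R : Type*} [Fintype l] [Fintype m] [Fintype p]
    [CommSemiring R] {A : Matrix l m R} {G : Matrix m l R} {M : Matrix l p R}
    (hG : A * G * A = A) (h : range M.mulVecLin ≤ range A.mulVecLin) : A * G * M = M := by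
  refine ext_iff_mulVec.2 fun x => ?_
  obtain ⟨y, hy⟩ := h ⟨x, rfl⟩
  change A *ᵥ y = M *ᵥ x at hy
  rw [← mulVec_mulVec, ← hy, mulVec_mulVec, hG]

variable {n K : Type*} [Fintype n] [Field K]

theorem isIdempotentElem_inv_smul_vecMulVec {κ v : n → K} (hvκ : v ⬝ᵥ κ ≠ 0) :
    IsIdempotentElem ((v ⬝ᵥ κ)⁻¹ • vecMulVec κ v) := by
  rw [IsIdempotentElem, smul_mul_smul, vecMulVec_mul_vecMulVec, vecMulVec_smul, smul_smul,
    mul_assoc, inv_mul_cancel₀ hvκ, mul_one]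

theorem vecMul_inv_smul_vecMulVec {κ v : n → K} (hvκ : v ⬝ᵥ κ ≠ 0) :
    v ᵥ* ((v ⬝ᵥ κ)⁻¹ • vecMulVec κ v) = v := by
  rw [vecMul_smul, vecMul_vecMulVec, smul_smul, inv_mul_cancel₀ hvκ, one_smul]

variable [DecidableEq n]

theorem range_mulVecLin_eq_ker_dotProduct {A : Matrix n n K} {v : n → K}
    (hker : finrank K (ker A.mulVecLin) = 1) (hv : v ≠ 0) (hvA : v ᵥ* A = 0) :
    range A.mulVecLin = ker (dotProductEquiv K n v) := by
  refine Submodule.eq_of_le_of_finrank_eq ?_ ?_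
  · rintro _ ⟨x, rfl⟩
    simp [dotProduct_mulVec, hvA]
  · have hA := A.mulVecLin.finrank_range_add_finrank_ker
    have hφ := (dotProductEquiv K n v).finrank_ker_add_one_of_ne_zero (by simpa using hv)
    omega

theorem inv_add_smul_one_sub_inv_smul {A B Q : Matrix n n K} (hAB : A * B = 1 - Q)
    (hAQ : A * Q = 0) (hQB : Q * B = 0) {ε : K} (hε : ε ≠ 0) (hB : IsUnit (1 + ε • B)) :
    IsUnit (A + ε • 1) ∧ (A + ε • 1)⁻¹ - ε⁻¹ • Q = B * (1 + ε • B)⁻¹ := by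
  have hright : (A + ε • 1) * ((B + ε⁻¹ • Q) * (1 + ε • B)⁻¹) = 1 := by
    rw [← Matrix.mul_assoc, add_smul_one_mul_add_inv_smul hAB hAQ hε, mul_nonsing_inv _
      ((isUnit_iff_isUnit_det _).1 hB)]
  have hQ : Q * (1 + ε • B)⁻¹ = Q := by
    have hQB' : Q * (1 + ε • B) = Q := by
      rw [Matrix.mul_add, Matrix.mul_one, Matrix.mul_smul, hQB, smul_zero, add_zero]
    conv_rhs => rw [← mul_nonsing_inv_cancel_right _ Q ((isUnit_iff_isUnit_det _).1 hB), hQB']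
  refine ⟨(isUnit_iff_isUnit_det _).2 (isUnit_det_of_right_inverse hright), ?_⟩
  rw [inv_eq_right_inv hright, Matrix.add_mul, Matrix.smul_mul, hQ, add_sub_cancel_right]

variable [TopologicalSpace K] [IsTopologicalRing K]

theorem eventually_isUnit_one_add_smul [T1Space K] (B : Matrix n n K) :
    ∀ᶠ ε in 𝓝 (0 : K), IsUnit (1 + ε • B) := by
  have hcont : Continuous fun ε : K => (1 + ε • B).det :=
    (continuous_const.add (continuous_id.smul continuous_const)).matrix_det
  filter_upwards [hcont.continuousAt.eventually_ne (x := 0) (y := 0) (by simp)] with ε h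
  exact (isUnit_iff_isUnit_det _).2 h.isUnit

theorem tendsto_mul_inv_one_add_smul [ContinuousInv₀ K] (B : Matrix n n K) :
    Tendsto (fun ε : K => B * (1 + ε • B)⁻¹) (𝓝 0) (𝓝 B) := by
  have hinv : ContinuousAt Inv.inv (1 : Matrix n n K) := by
    refine continuousAt_matrix_inv _ ?_
    simpa [Ring.inverse_eq_inv'] using continuousAt_inv₀ (one_ne_zero (α := K))
  have hlin : Tendsto (fun ε : K => 1 + ε • B) (𝓝 0) (𝓝 1) :=
    (continuous_const.add (continuous_id.smul continuous_const)).tendsto' 0 1 (by simp)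
  simpa using tendsto_const_nhds.mul (hinv.tendsto.comp hlin)

theorem tendsto_inv_add_smul_one_sub_inv_smul [T1Space K] [ContinuousInv₀ K]
    {A B Q : Matrix n n K} (hAB : A * B = 1 - Q) (hAQ : A * Q = 0) (hQB : Q * B = 0) :
    (∀ᶠ ε in 𝓝[≠] (0 : K), IsUnit (A + ε • 1)) ∧
      Tendsto (fun ε : K => (A + ε • 1)⁻¹ - ε⁻¹ • Q) (𝓝[≠] 0) (𝓝 B) := by
  have h : ∀ᶠ ε in 𝓝[≠] (0 : K), IsUnit (1 + ε • B) ∧ ε ≠ 0 :=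
    (eventually_nhdsWithin_of_eventually_nhds (eventually_isUnit_one_add_smul B)).and
      self_mem_nhdsWithin
  refine ⟨h.mono fun ε ⟨hB, hε⟩ => (inv_add_smul_one_sub_inv_smul hAB hAQ hQB hε hB).1, ?_⟩
  refine ((tendsto_mul_inv_one_add_smul B).mono_left nhdsWithin_le_nhds).congr' ?_
  exact h.mono fun ε ⟨hB, hε⟩ => (inv_add_smul_one_sub_inv_smul hAB hAQ hQB hε hB).2.symm

end Matrix

theorem stmt_14_general (m : ℕ) (A : Matrix (Fin m) (Fin m) ℝ)
    (hker : Module.finrank ℝ (LinearMap.ker A.mulVecLin) = 1)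
    (v κ : Fin m → ℝ) (hv : v ≠ 0)
    (hvA : Aᵀ *ᵥ v = 0) (hκA : A *ᵥ κ = 0) (hvκ : v ⬝ᵥ κ ≠ 0)
    (G : Matrix (Fin m) (Fin m) ℝ)
    (hG1 : A * G * A = A) :
    let P : Matrix (Fin m) (Fin m) ℝ := 1 - (v ⬝ᵥ κ)⁻¹ • vecMulVec κ v
    (∃ η : ℝ, 0 < η ∧ ∀ ε : ℝ, 0 < |ε| → |ε| < η →
      IsUnit (A + ε • (1 : Matrix (Fin m) (Fin m) ℝ))) ∧
    Tendsto (fun ε : ℝ =>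
        (A + ε • (1 : Matrix (Fin m) (Fin m) ℝ))⁻¹ -
          ε⁻¹ • ((v ⬝ᵥ κ)⁻¹ • vecMulVec κ v))
      (𝓝[≠] 0) (𝓝 (P * G * P)) := by
  intro P
  set Q := (v ⬝ᵥ κ)⁻¹ • vecMulVec κ v
  have hP : P = 1 - Q := rfl
  have hQ : IsIdempotentElem Q := isIdempotentElem_inv_smul_vecMulVec hvκ
  have hAQ : A * Q = 0 := by rw [Matrix.mul_smul, mul_vecMulVec, hκA, zero_vecMulVec, smul_zero]
  have hPA : range P.mulVecLin ≤ range A.mulVecLin := by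
    rw [range_mulVecLin_eq_ker_dotProduct hker hv (by rwa [← mulVec_transpose])]
    rintro _ ⟨x, rfl⟩
    change v ⬝ᵥ ((1 - Q) *ᵥ x) = 0
    rw [dotProduct_mulVec, vecMul_sub, vecMul_one, vecMul_inv_smul_vecMulVec hvκ, sub_self,
      zero_dotProduct]
  have hAP : A * P = A := by rw [hP, Matrix.mul_sub, Matrix.mul_one, hAQ, sub_zero]
  have hQP : Q * P = 0 := by rw [hP, Matrix.mul_sub, Matrix.mul_one, hQ.eq, sub_self]
  have hAB : A * (P * G * P) = 1 - Q := by
    rw [← Matrix.mul_assoc, ← Matrix.mul_assoc, hAP, mul_mul_eq_self_of_range_le hG1 hPA]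
  have hQB : Q * (P * G * P) = 0 := by
    rw [← Matrix.mul_assoc, ← Matrix.mul_assoc, hQP, Matrix.zero_mul, Matrix.zero_mul]
  obtain ⟨hunit, hlim⟩ := tendsto_inv_add_smul_one_sub_inv_smul hAB hAQ hQB
  obtain ⟨η, hη, hball⟩ := Metric.mem_nhdsWithin_iff.1 hunit
  exact ⟨⟨η, hη, fun ε hε hεη => hball ⟨by simpa using hεη, abs_pos.1 hε⟩⟩, hlim⟩

/-- constant Laurent coefficient of the resolvent at its simple pole.  With
`A = I − Θ`, `dim Ker A = 1`, `Aᵀv = 0`, `Aκ = 0`, `⟨v,κ⟩ ≠ 0`, `G` the Moore–Penrose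
pseudoinverse of `A`, and `P = I − ⟨v,κ⟩⁻¹κvᵀ`, there is `η > 0` such that `A + εI` is
invertible for `0 < |ε| < η` and `(A+εI)⁻¹ − ε⁻¹⟨v,κ⟩⁻¹κvᵀ → P·G·P` as `ε → 0`. -/
theorem stmt_14 (m : ℕ) (hm : 1 ≤ m) (Θ : Matrix (Fin m) (Fin m) ℝ)
    (A : Matrix (Fin m) (Fin m) ℝ) (hA : A = 1 - Θ)
    (hker : Module.finrank ℝ (LinearMap.ker A.mulVecLin) = 1)
    (v κ : Fin m → ℝ) (hv : v ≠ 0) (hκ : κ ≠ 0)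
    (hvA : Aᵀ *ᵥ v = 0) (hκA : A *ᵥ κ = 0) (hvκ : v ⬝ᵥ κ ≠ 0)
    (G : Matrix (Fin m) (Fin m) ℝ)
    (hG1 : A * G * A = A) (hG2 : G * A * G = G)
    (hG3 : (A * G)ᵀ = A * G) (hG4 : (G * A)ᵀ = G * A) :
    let P : Matrix (Fin m) (Fin m) ℝ := 1 - (v ⬝ᵥ κ)⁻¹ • vecMulVec κ v
    (∃ η : ℝ, 0 < η ∧ ∀ ε : ℝ, 0 < |ε| → |ε| < η →
      IsUnit (A + ε • (1 : Matrix (Fin m) (Fin m) ℝ))) ∧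
    Tendsto (fun ε : ℝ =>
        (A + ε • (1 : Matrix (Fin m) (Fin m) ℝ))⁻¹ -
          ε⁻¹ • ((v ⬝ᵥ κ)⁻¹ • vecMulVec κ v))
      (𝓝[≠] 0) (𝓝 (P * G * P)) :=
  stmt_14_general m A hker v κ hv hvA hκA hvκ G hG1
end

section
/- Let m ≥ 1 and let Θ be an m×m real matrix; set A := I − Θ. Assume the kernel of the linear map x ↦ Ax on ℝ^m has dimension 1, and let v, κ ∈ ℝ^m be nonzero with Aᵀv = 0, Aκ = 0 and ⟨v, κ⟩ ≠ 0. Let a ∈ ℝ and c, t, w ∈ ℝ^m with ⟨v, t⟩ ≠ 0 and ⟨w, κ⟩ ≠ 0. Then there exists η > 0 such that for every real ε with 0 < |ε| < η the matrix A + εI is invertible and wᵀ(A + εI)^{−1}t ≠ 0, and ( a + cᵀ(A + εI)^{−1}t ) / ( wᵀ(A + εI)^{−1}t ) converges to ⟨c, κ⟩/⟨w, κ⟩ as ε → 0. -/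
open Matrix Filter Topology

/-! The kernel of `A` is spanned by `κ` and that of `Aᵀ` by `v`, so `A * adj A = adj A * A = 0`
forces `adj A = s • κ vᵀ`, and `s ≠ 0` because `A` has rank `m - 1`. Writing
`(A + εI)⁻¹ = det(A + εI)⁻¹ • adj(A + εI)`, the ratio equals
`(a det(A + εI) + cᵀ adj(A + εI) t) / (wᵀ adj(A + εI) t)` whenever `A + εI` is invertible, which
holds for all small `ε ≠ 0` since `det(A + εI)` is a nonzero polynomial in `ε`. This expression is
continuous at `ε = 0`, with value `s ⟨v,t⟩⟨c,κ⟩ / (s ⟨v,t⟩⟨w,κ⟩)`. -/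

theorem Polynomial.eventually_eval_ne_zero_nhdsNE {R : Type*} [CommRing R] [IsDomain R]
    [TopologicalSpace R] [T1Space R] {p : Polynomial R} (hp : p ≠ 0) (a : R) :
    ∀ᶠ x in 𝓝[≠] a, p.eval x ≠ 0 := by
  classical
  have hroots : ∀ r ∈ p.roots.toFinset, ∀ᶠ x in 𝓝[≠] a, x ≠ r := fun r _ => by
    rcases eq_or_ne r a with rfl | hr
    · exact self_mem_nhdsWithin
    · exact eventually_ne_nhdsWithin hr.symm
  filter_upwards [(eventually_all_finset _).2 hroots] with x hx hroot
  exact hx x (by simp [hp, hroot]) rfl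

namespace Matrix

section Field

variable {K : Type*} [Field K] {n : Type*} [Fintype n]

theorem finrank_ker_mulVecLin_transpose (A : Matrix n n K) :
    Module.finrank K (LinearMap.ker Aᵀ.mulVecLin) =
      Module.finrank K (LinearMap.ker A.mulVecLin) := by
  have h := A.mulVecLin.finrank_range_add_finrank_ker
  have hT := Aᵀ.mulVecLin.finrank_range_add_finrank_ker
  have hrank := A.rank_transpose
  unfold rank at hrank
  omega

theorem ker_mulVecLin_eq_span_singleton {m : Type*} {A : Matrix m n K} {x : n → K}
    (h : Module.finrank K (LinearMap.ker A.mulVecLin) = 1) (hx : x ≠ 0) (hAx : A *ᵥ x = 0) :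
    LinearMap.ker A.mulVecLin = K ∙ x :=
  (Submodule.eq_of_le_of_finrank_le (Submodule.span_singleton_le_iff_mem _ _ |>.2 hAx)
    (by rw [h, finrank_span_singleton hx])).symm

variable [DecidableEq n]

theorem exists_eq_smul_vecMulVec_of_mul_eq_zero {A M : Matrix n n K} {κ v : n → K}
    (hker : LinearMap.ker A.mulVecLin = K ∙ κ) (hkerT : LinearMap.ker Aᵀ.mulVecLin = K ∙ v)
    (hAM : A * M = 0) (hMA : M * A = 0) (hv : v ≠ 0) : ∃ s : K, M = s • vecMulVec κ v := by
  have hcol : ∀ j, ∃ r : K, r • κ = M.col j := fun j => by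
    rw [← Submodule.mem_span_singleton, ← hker, LinearMap.mem_ker, mulVecLin_apply,
      ← mulVec_single_one, mulVec_mulVec, hAM, zero_mulVec]
  have hrow : ∀ i, ∃ q : K, q • v = M.row i := fun i => by
    rw [← Submodule.mem_span_singleton, ← hkerT, LinearMap.mem_ker, mulVecLin_apply,
      mulVec_transpose, ← single_one_vecMul, vecMul_vecMul, hMA, vecMul_zero]
  obtain ⟨j₀, hj₀⟩ : ∃ j, v j ≠ 0 := Function.ne_iff.1 hv
  obtain ⟨r, hr⟩ := hcol j₀
  choose q hq using hrow
  refine ⟨r / v j₀, ext fun i j => ?_⟩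
  have hij := congrFun (hq i) j
  have hij₀ := congrFun (hq i) j₀
  have hi := congrFun hr i
  simp only [Pi.smul_apply, smul_eq_mul, row_apply, col_apply] at hij hij₀ hi
  rw [smul_apply, vecMulVec_apply, smul_eq_mul]
  field_simp
  linear_combination (-v j₀) * hij + v j * hij₀ - v j * hi

/-- The `(i, j)` cofactor of `A` is the determinant of `A` with row `j` replaced by `eᵢ`; a
nonzero vector in the kernel of that matrix would lie in `ker A = K ∙ κ`, because `v j ≠ 0` makes
row `j` of `A` a combination of the other rows, yet vanish at `i`, where `κ` does not. -/
theorem adjugate_apply_ne_zero {A : Matrix n n K} {κ v : n → K}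
    (hker : LinearMap.ker A.mulVecLin = K ∙ κ) (hvA : Aᵀ *ᵥ v = 0) {i j : n} (hi : κ i ≠ 0)
    (hj : v j ≠ 0) : A.adjugate i j ≠ 0 := by
  rw [adjugate_apply]
  intro hdet
  obtain ⟨x, hx, hBx⟩ := exists_mulVec_eq_zero_iff.2 hdet
  have hrow : ∀ k, (A.updateRow j (Pi.single i 1) *ᵥ x) k = 0 := fun k => by rw [hBx]; rfl
  have hxi : x i = 0 := by simpa [mulVec, single_dotProduct] using hrow j
  have hAx_single : A *ᵥ x = Pi.single j ((A *ᵥ x) j) := by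
    ext k
    rcases eq_or_ne k j with rfl | hk
    · simp
    · simpa [mulVec, updateRow_ne hk, hk] using hrow k
  have hvAx : v ⬝ᵥ (A *ᵥ x) = 0 := by
    rw [dotProduct_mulVec, ← mulVec_transpose, hvA, zero_dotProduct]
  rw [hAx_single, dotProduct_single, mul_eq_zero, or_iff_right hj] at hvAx
  have hAx : x ∈ LinearMap.ker A.mulVecLin := by
    rw [LinearMap.mem_ker, mulVecLin_apply, hAx_single, hvAx, Pi.single_zero]
  rw [hker, Submodule.mem_span_singleton] at hAx
  obtain ⟨r, rfl⟩ := hAx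
  have hr : r = 0 := by simpa [hi] using hxi
  exact hx (by rw [hr, zero_smul])

theorem exists_adjugate_eq_smul_vecMulVec {A : Matrix n n K}
    (hker : Module.finrank K (LinearMap.ker A.mulVecLin) = 1) {κ v : n → K} (hκ : κ ≠ 0)
    (hv : v ≠ 0) (hκA : A *ᵥ κ = 0) (hvA : Aᵀ *ᵥ v = 0) :
    ∃ s ≠ (0 : K), A.adjugate = s • vecMulVec κ v := by
  have hdet : A.det = 0 := exists_mulVec_eq_zero_iff.1 ⟨κ, hκ, hκA⟩
  have hspan := ker_mulVecLin_eq_span_singleton hker hκ hκA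
  have hspanT := ker_mulVecLin_eq_span_singleton
    (by rwa [finrank_ker_mulVecLin_transpose]) hv hvA
  obtain ⟨s, hs⟩ := exists_eq_smul_vecMulVec_of_mul_eq_zero hspan hspanT
    (by rw [mul_adjugate, hdet, zero_smul]) (by rw [adjugate_mul, hdet, zero_smul]) hv
  obtain ⟨i, hi⟩ : ∃ i, κ i ≠ 0 := Function.ne_iff.1 hκ
  obtain ⟨j, hj⟩ : ∃ j, v j ≠ 0 := Function.ne_iff.1 hv
  refine ⟨s, ?_, hs⟩
  rintro rfl
  exact adjugate_apply_ne_zero hspan hvA hi hj (by simp [hs])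

theorem dotProduct_inv_mulVec (M : Matrix n n K) (x t : n → K) :
    x ⬝ᵥ (M⁻¹ *ᵥ t) = M.det⁻¹ * (x ⬝ᵥ (M.adjugate *ᵥ t)) := by
  rw [inv_def, Ring.inverse_eq_inv', smul_mulVec, dotProduct_smul, smul_eq_mul]

theorem add_dotProduct_inv_mulVec_div {M : Matrix n n K} (hM : M.det ≠ 0) (a : K)
    (c t w : n → K) :
    (a + c ⬝ᵥ (M⁻¹ *ᵥ t)) / (w ⬝ᵥ (M⁻¹ *ᵥ t)) =
      (a * M.det + c ⬝ᵥ (M.adjugate *ᵥ t)) / (w ⬝ᵥ (M.adjugate *ᵥ t)) := by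
  rw [dotProduct_inv_mulVec, dotProduct_inv_mulVec, ← mul_div_mul_left _ _ hM]
  congr 1 <;> field_simp

theorem eventually_det_add_smul_one_ne_zero [TopologicalSpace K] [T1Space K] (A : Matrix n n K) :
    ∀ᶠ ε in 𝓝[≠] (0 : K), (A + ε • (1 : Matrix n n K)).det ≠ 0 := by
  filter_upwards [Polynomial.eventually_eval_ne_zero_nhdsNE (-A).charpoly_monic.ne_zero 0]
    with ε hε
  rwa [eval_charpoly, scalar_apply, ← smul_one_eq_diagonal, sub_neg_eq_add, add_comm] at hε

end Field

theorem tendsto_nhdsNE_div_dotProduct_inv_add_smul_one_mulVec {𝕜 : Type*} [NormedField 𝕜]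
    {n : Type*} [Fintype n] [DecidableEq n] (A : Matrix n n 𝕜) (a : 𝕜) (c t w : n → 𝕜)
    (hw : w ⬝ᵥ (A.adjugate *ᵥ t) ≠ 0) :
    (∀ᶠ ε in 𝓝[≠] (0 : 𝕜), IsUnit (A + ε • (1 : Matrix n n 𝕜)) ∧
      w ⬝ᵥ ((A + ε • (1 : Matrix n n 𝕜))⁻¹ *ᵥ t) ≠ 0) ∧
    Tendsto (fun ε : 𝕜 => (a + c ⬝ᵥ ((A + ε • (1 : Matrix n n 𝕜))⁻¹ *ᵥ t)) /
        (w ⬝ᵥ ((A + ε • (1 : Matrix n n 𝕜))⁻¹ *ᵥ t)))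
      (𝓝[≠] 0) (𝓝 ((a * A.det + c ⬝ᵥ (A.adjugate *ᵥ t)) / (w ⬝ᵥ (A.adjugate *ᵥ t)))) := by
  set M : 𝕜 → Matrix n n 𝕜 := fun ε => A + ε • (1 : Matrix n n 𝕜)
  have hM : Continuous M := continuous_const.add (continuous_id.smul continuous_const)
  have hM0 : M 0 = A := by simp [M]
  have hpair : ∀ x, Continuous fun ε => x ⬝ᵥ ((M ε).adjugate *ᵥ t) := fun x =>
    continuous_const.dotProduct (hM.matrix_adjugate.matrix_mulVec continuous_const)
  have hw0 : w ⬝ᵥ ((M 0).adjugate *ᵥ t) ≠ 0 := by rwa [hM0]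
  have hdet := A.eventually_det_add_smul_one_ne_zero
  refine ⟨?_, ?_⟩
  · filter_upwards [hdet, nhdsWithin_le_nhds ((hpair w).continuousAt.eventually_ne hw0)]
      with ε hε hwε
    refine ⟨(isUnit_iff_isUnit_det _).2 hε.isUnit, ?_⟩
    rw [dotProduct_inv_mulVec]
    exact mul_ne_zero (inv_ne_zero hε) hwε
  · have hnum : Continuous fun ε => a * (M ε).det + c ⬝ᵥ ((M ε).adjugate *ᵥ t) :=
      (continuous_const.mul hM.matrix_det).add (hpair c)
    have hlim := (hnum.continuousAt.div (hpair w).continuousAt hw0).tendsto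
    rw [Pi.div_apply, hM0] at hlim
    refine (hlim.mono_left nhdsWithin_le_nhds).congr' ?_
    filter_upwards [hdet] with ε hε
    exact (add_dotProduct_inv_mulVec_div hε a c t w).symm

end Matrix

theorem stmt_15_general (m : ℕ) (A : Matrix (Fin m) (Fin m) ℝ)
    (hker : Module.finrank ℝ (LinearMap.ker A.mulVecLin) = 1)
    (v κ : Fin m → ℝ) (hv : v ≠ 0) (hκ : κ ≠ 0)
    (hvA : Aᵀ *ᵥ v = 0) (hκA : A *ᵥ κ = 0)
    (a : ℝ) (c t w : Fin m → ℝ) (hvt : v ⬝ᵥ t ≠ 0) (hwκ : w ⬝ᵥ κ ≠ 0) :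
    (∃ η : ℝ, 0 < η ∧ ∀ ε : ℝ, 0 < |ε| → |ε| < η →
      IsUnit (A + ε • (1 : Matrix (Fin m) (Fin m) ℝ)) ∧
      w ⬝ᵥ ((A + ε • (1 : Matrix (Fin m) (Fin m) ℝ))⁻¹ *ᵥ t) ≠ 0) ∧
    Tendsto (fun ε : ℝ =>
        (a + c ⬝ᵥ ((A + ε • (1 : Matrix (Fin m) (Fin m) ℝ))⁻¹ *ᵥ t)) /
          (w ⬝ᵥ ((A + ε • (1 : Matrix (Fin m) (Fin m) ℝ))⁻¹ *ᵥ t)))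
      (𝓝[≠] 0) (𝓝 ((c ⬝ᵥ κ) / (w ⬝ᵥ κ))) := by
  obtain ⟨s, hs, hadj⟩ := exists_adjugate_eq_smul_vecMulVec hker hκ hv hκA hvA
  have hdet : A.det = 0 := exists_mulVec_eq_zero_iff.1 ⟨κ, hκ, hκA⟩
  have hpair : ∀ x, x ⬝ᵥ (A.adjugate *ᵥ t) = s * (v ⬝ᵥ t) * (x ⬝ᵥ κ) := fun x => by
    rw [hadj, smul_mulVec, vecMulVec_mulVec, op_smul_eq_smul, dotProduct_smul, dotProduct_smul,
      smul_eq_mul, smul_eq_mul, mul_assoc]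
  have hsvt : s * (v ⬝ᵥ t) ≠ 0 := mul_ne_zero hs hvt
  obtain ⟨hev, hlim⟩ := tendsto_nhdsNE_div_dotProduct_inv_add_smul_one_mulVec A a c t w
    (by rw [hpair]; exact mul_ne_zero hsvt hwκ)
  rw [hdet, mul_zero, zero_add, hpair, hpair, mul_div_mul_left _ _ hsvt] at hlim
  refine ⟨?_, hlim⟩
  obtain ⟨η, hη, h⟩ := Metric.eventually_nhds_iff.1 (eventually_nhdsWithin_iff.1 hev)
  exact ⟨η, hη, fun ε hε hεη => h (by rwa [Real.dist_0_eq_abs]) (abs_pos.1 hε)⟩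

/-- intermediate ratio limit in the proof of Theorem 3.4.  With `A = I − Θ`,
`dim Ker A = 1`, `Aᵀv = 0`, `Aκ = 0`, `⟨v,κ⟩ ≠ 0`, and `⟨v,t⟩ ≠ 0`, `⟨w,κ⟩ ≠ 0`, there is
`η > 0` such that for `0 < |ε| < η` the matrix `A + εI` is invertible and
`wᵀ(A+εI)⁻¹t ≠ 0`, and `(a + cᵀ(A+εI)⁻¹t)/(wᵀ(A+εI)⁻¹t) → ⟨c,κ⟩/⟨w,κ⟩` as `ε → 0`. -/
theorem stmt_15 (m : ℕ) (hm : 1 ≤ m) (Θ : Matrix (Fin m) (Fin m) ℝ)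
    (A : Matrix (Fin m) (Fin m) ℝ) (hA : A = 1 - Θ)
    (hker : Module.finrank ℝ (LinearMap.ker A.mulVecLin) = 1)
    (v κ : Fin m → ℝ) (hv : v ≠ 0) (hκ : κ ≠ 0)
    (hvA : Aᵀ *ᵥ v = 0) (hκA : A *ᵥ κ = 0) (hvκ : v ⬝ᵥ κ ≠ 0)
    (a : ℝ) (c t w : Fin m → ℝ) (hvt : v ⬝ᵥ t ≠ 0) (hwκ : w ⬝ᵥ κ ≠ 0) :
    (∃ η : ℝ, 0 < η ∧ ∀ ε : ℝ, 0 < |ε| → |ε| < η →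
      IsUnit (A + ε • (1 : Matrix (Fin m) (Fin m) ℝ)) ∧
      w ⬝ᵥ ((A + ε • (1 : Matrix (Fin m) (Fin m) ℝ))⁻¹ *ᵥ t) ≠ 0) ∧
    Tendsto (fun ε : ℝ =>
        (a + c ⬝ᵥ ((A + ε • (1 : Matrix (Fin m) (Fin m) ℝ))⁻¹ *ᵥ t)) /
          (w ⬝ᵥ ((A + ε • (1 : Matrix (Fin m) (Fin m) ℝ))⁻¹ *ᵥ t)))
      (𝓝[≠] 0) (𝓝 ((c ⬝ᵥ κ) / (w ⬝ᵥ κ))) :=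
  stmt_15_general m A hker v κ hv hκ hvA hκA a c t w hvt hwκ
end
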